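/- arXiv:2409.13458 — 4 statements merged into one kernel-verified Lean document; each statement's English description precedes it below -/
import Mathlib

section
/- Let (X,Y,R) be random variables with Y,R binary. Assume Y ⟂ R | X, positivity Pr[R=1|X=x] > 0 wherever Pr[R=0|X=x] > 0 on the support, and that the denominator below is positive. Then for any measurable g(X) ∈ {0,1}, Pr[g(X)=1 | Y=1, R=0] = E[ (Pr[R=0|X]/Pr[R=1|X]) · I(g(X)=1, Y=1, R=1) ] / E[ (Pr[R=0|X]/Pr[R=1|X]) · I(Y=1, R=1) ]. -/
open MeasureTheory Real Filter Topology

set_option maxHeartbeats 1000000 in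
/-- Inverse-odds weighting identifiability of sensitivity in the target
population: under conditional exchangeability `Y ⟂ R | X` (encoded via a common version `m`
of `Pr[Y=1|X]` in both populations `R=1` and `R=0`) and positivity, the sensitivity
`Pr[g(X)=1 | Y=1, R=0]` equals
`E[(Pr[R=0|X]/Pr[R=1|X]) I(g(X)=1, Y=1, R=1)] / E[(Pr[R=0|X]/Pr[R=1|X]) I(Y=1, R=1)]`,
where `p` is a version of `Pr[R=1|X]` so `Pr[R=0|X] = 1 - p(X)`. -/
theorem sensitivity_weighting_identification
    {Ω 𝓧 : Type*} [MeasurableSpace Ω] [MeasurableSpace 𝓧]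
    (μ : Measure Ω) [IsProbabilityMeasure μ]
    (X : Ω → 𝓧) (Y R : Ω → ℝ) (g m p : 𝓧 → ℝ)
    (hX : Measurable X) (hY : Measurable Y) (hR : Measurable R)
    (hg : Measurable g) (hm : Measurable m) (hp : Measurable p)
    (hYbin : ∀ ω, Y ω = 0 ∨ Y ω = 1) (hRbin : ∀ ω, R ω = 0 ∨ R ω = 1)
    (hgbin : ∀ x, g x = 0 ∨ g x = 1)
    -- `m` is a version of `Pr[Y=1 | X, R=1]`
    (hm_cond : ∀ f : 𝓧 → ℝ, Measurable f → (∀ x, |f x| ≤ 1) →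
      ∫ ω, f (X ω) * R ω * Y ω ∂μ = ∫ ω, f (X ω) * R ω * m (X ω) ∂μ)
    -- conditional exchangeability `Y ⟂ R | X`
    (hexch : ∀ f : 𝓧 → ℝ, Measurable f → (∀ x, |f x| ≤ 1) →
      ∫ ω, f (X ω) * (1 - R ω) * Y ω ∂μ = ∫ ω, f (X ω) * (1 - R ω) * m (X ω) ∂μ)
    -- `p` is a version of `Pr[R=1 | X]`
    (hp_cond : ∀ f : 𝓧 → ℝ, Measurable f → (∀ x, |f x| ≤ 1) →
      ∫ ω, f (X ω) * R ω ∂μ = ∫ ω, f (X ω) * p (X ω) ∂μ)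
    -- positivity: `Pr[R=1|X=x] > 0` wherever `Pr[R=0|X=x] > 0` (on the support)
    (hpos : ∀ᵐ ω ∂μ, 0 < 1 - p (X ω) → 0 < p (X ω))
    -- the denominator of the weighting representation is positive
    (hden : 0 < ∫ ω, ((1 - p (X ω)) / p (X ω)) * Y ω * R ω ∂μ) :
    (∫ ω, (1 - R ω) * g (X ω) * Y ω ∂μ) / (∫ ω, (1 - R ω) * Y ω ∂μ)
      = (∫ ω, ((1 - p (X ω)) / p (X ω)) * g (X ω) * Y ω * R ω ∂μ)
        / (∫ ω, ((1 - p (X ω)) / p (X ω)) * Y ω * R ω ∂μ) := by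
  classical
  -- pointwise bounds on the binary variables
  have hY0 : ∀ ω, 0 ≤ Y ω := fun ω => by rcases hYbin ω with h | h <;> rw [h] <;> norm_num
  have hY1 : ∀ ω, Y ω ≤ 1 := fun ω => by rcases hYbin ω with h | h <;> rw [h] <;> norm_num
  have hR0 : ∀ ω, 0 ≤ R ω := fun ω => by rcases hRbin ω with h | h <;> rw [h] <;> norm_num
  have hR1 : ∀ ω, R ω ≤ 1 := fun ω => by rcases hRbin ω with h | h <;> rw [h] <;> norm_num
  -- integrability of a.e.-bounded measurable functions
  have hbint : ∀ (u : Ω → ℝ) (C : ℝ), Measurable u → (∀ᵐ ω ∂μ, |u ω| ≤ C) → Integrable u μ := by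
    intro u C hu hC
    exact (integrable_const C).mono' hu.aestronglyMeasurable
      (by filter_upwards [hC] with ω h; simpa using h)
  -- pointwise congruence of integrals
  have hcongr : ∀ (u v : Ω → ℝ), (∀ ω, u ω = v ω) → ∫ ω, u ω ∂μ = ∫ ω, v ω ∂μ :=
    fun u v h => integral_congr_ae (Filter.EventuallyEq.of_eq (funext h))
  -- a.e. vanishing of nonnegative integrands with zero integral
  have aez : ∀ (u : Ω → ℝ) (C : ℝ), Measurable u → (∀ ω, |u ω| ≤ C) → (∀ ω, 0 ≤ u ω) →
      ∫ ω, u ω ∂μ = 0 → ∀ᵐ ω ∂μ, u ω = 0 := by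
    intro u C hu hC hnn hz
    have h := (integral_eq_zero_iff_of_nonneg hnn (hbint u C hu (ae_of_all _ hC))).mp hz
    filter_upwards [h] with ω hω using hω
  -- `p (X ω) ≤ 1` a.e.
  have hpXle : ∀ᵐ ω ∂μ, p (X ω) ≤ 1 := by
    have hk : ∀ k : ℕ, ∀ᵐ ω ∂μ, ¬(1 < p (X ω) ∧ p (X ω) ≤ (k : ℝ)) := by
      intro k
      have hk0 : (0:ℝ) ≤ (k:ℝ) := Nat.cast_nonneg k
      set f : 𝓧 → ℝ := fun x => if 1 < p x ∧ p x ≤ (k : ℝ) then 1 else 0 with hfdef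
      have hfm : Measurable f := by
        apply Measurable.ite _ measurable_const measurable_const
        exact (measurableSet_lt measurable_const hp).inter (measurableSet_le hp measurable_const)
      have hfb : ∀ x, |f x| ≤ 1 := by
        intro x; by_cases h : 1 < p x ∧ p x ≤ (k : ℝ) <;> simp [hfdef, h]
      have hk0 : (0:ℝ) ≤ (k:ℝ) := Nat.cast_nonneg k
      have h1 := hp_cond f hfm hfb
      have hz : ∫ ω, f (X ω) * (p (X ω) - R ω) ∂μ = 0 := by
        rw [hcongr _ (fun ω => f (X ω) * p (X ω) - f (X ω) * R ω) (fun ω => by ring)]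
        rw [integral_sub
          (hbint (fun ω => f (X ω) * p (X ω)) ((k : ℝ) + 1) ((hfm.comp hX).mul (hp.comp hX)) (ae_of_all _ fun ω => by
            by_cases h : 1 < p (X ω) ∧ p (X ω) ≤ (k : ℝ)
            · simp only [hfdef, if_pos h, one_mul]
              rw [abs_le]; constructor <;> [linarith [h.1, hk0]; linarith [h.2, hk0]]
            · simp only [hfdef, if_neg h, zero_mul, abs_zero]; positivity))
          (hbint (fun ω => f (X ω) * R ω) 1 ((hfm.comp hX).mul hR) (ae_of_all _ fun ω => by
            rw [abs_mul, abs_of_nonneg (hR0 ω)]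
            exact mul_le_one₀ (hfb (X ω)) (hR0 ω) (hR1 ω)))]
        rw [← h1, sub_self]
      have hnn : ∀ ω, 0 ≤ f (X ω) * (p (X ω) - R ω) := by
        intro ω
        by_cases h : 1 < p (X ω) ∧ p (X ω) ≤ (k : ℝ)
        · simp only [hfdef, if_pos h, one_mul]; have := hR1 ω; linarith [h.1]
        · simp [hfdef, h]
      have hbd : ∀ ω, |f (X ω) * (p (X ω) - R ω)| ≤ (k : ℝ) + 2 := by
        intro ω
        by_cases h : 1 < p (X ω) ∧ p (X ω) ≤ (k : ℝ)
        · simp only [hfdef, if_pos h, one_mul]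
          have := hR0 ω; have := hR1 ω
          rw [abs_le]; constructor <;> [linarith [h.1, hk0]; linarith [h.2, hk0]]
        · simp only [hfdef, if_neg h, zero_mul, abs_zero]; positivity
      have hae := aez (fun ω => f (X ω) * (p (X ω) - R ω)) ((k : ℝ) + 2) ((hfm.comp hX).mul ((hp.comp hX).sub hR)) hbd hnn hz
      filter_upwards [hae] with ω hω h
      rw [hfdef] at hω
      simp only [if_pos h, one_mul] at hω
      have := hR1 ω; linarith [h.1]
    have hall := ae_all_iff.mpr hk
    filter_upwards [hall] with ω hω
    by_contra h
    push_neg at h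
    exact hω ⌈p (X ω)⌉₊ ⟨h, Nat.le_ceil _⟩
  -- `0 < p (X ω)` a.e.
  have hpXpos : ∀ᵐ ω ∂μ, 0 < p (X ω) := by
    filter_upwards [hpos] with ω hω
    by_contra h
    push_neg at h
    have := hω (by linarith)
    linarith
  -- `m (X ω) ≤ 1` a.e.
  have hmXle : ∀ᵐ ω ∂μ, m (X ω) ≤ 1 := by
    have hk : ∀ k : ℕ, ∀ᵐ ω ∂μ, ¬(1 < m (X ω) ∧ m (X ω) ≤ (k : ℝ)) := by
      intro k
      have hk0 : (0:ℝ) ≤ (k:ℝ) := Nat.cast_nonneg k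
      set f : 𝓧 → ℝ := fun x => if 1 < m x ∧ m x ≤ (k : ℝ) then 1 else 0 with hfdef
      have hfm : Measurable f := by
        apply Measurable.ite _ measurable_const measurable_const
        exact (measurableSet_lt measurable_const hm).inter (measurableSet_le hm measurable_const)
      have hfb : ∀ x, |f x| ≤ 1 := by
        intro x; by_cases h : 1 < m x ∧ m x ≤ (k : ℝ) <;> simp [hfdef, h]
      have hbd : ∀ ω (c : ℝ), 0 ≤ c → c ≤ 1 → |f (X ω) * c * (m (X ω) - Y ω)| ≤ (k : ℝ) + 2 := by
        intro ω c hc0 hc1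
        by_cases h : 1 < m (X ω) ∧ m (X ω) ≤ (k : ℝ)
        · simp only [hfdef, if_pos h, one_mul]
          rw [abs_mul, abs_of_nonneg hc0]
          have hY0' := hY0 ω; have hY1' := hY1 ω
          have : |m (X ω) - Y ω| ≤ (k : ℝ) + 2 := by
            rw [abs_le]; constructor <;> [linarith [h.1, hk0]; linarith [h.2, hk0]]
          nlinarith [abs_nonneg (m (X ω) - Y ω)]
        · simp only [hfdef, if_neg h, zero_mul, abs_zero]; positivity
      have hnn : ∀ ω (c : ℝ), 0 ≤ c → |f (X ω) * c * (m (X ω) - Y ω)| = f (X ω) * c * (m (X ω) - Y ω) → True := fun _ _ _ _ => trivial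
      -- first a.e. zero: with weight R
      have hz1 : ∫ ω, f (X ω) * R ω * (m (X ω) - Y ω) ∂μ = 0 := by
        rw [hcongr _ (fun ω => f (X ω) * R ω * m (X ω) - f (X ω) * R ω * Y ω) (fun ω => by ring)]
        rw [integral_sub
          (hbint (fun ω => f (X ω) * R ω * m (X ω)) ((k : ℝ) + 1) (((hfm.comp hX).mul hR).mul (hm.comp hX)) (ae_of_all _ fun ω => by
            by_cases h : 1 < m (X ω) ∧ m (X ω) ≤ (k : ℝ)
            · simp only [hfdef, if_pos h, one_mul]
              rw [abs_mul, abs_of_nonneg (hR0 ω)]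
              have h1' := hR1 ω; have h0' := hR0 ω
              have : |m (X ω)| ≤ (k : ℝ) + 1 := by
                rw [abs_le]; constructor <;> [linarith [h.1, hk0]; linarith [h.2, hk0]]
              nlinarith [abs_nonneg (m (X ω))]
            · simp only [hfdef, if_neg h, zero_mul, abs_zero]; positivity))
          (hbint (fun ω => f (X ω) * R ω * Y ω) 1 (((hfm.comp hX).mul hR).mul hY) (ae_of_all _ fun ω => by
            rw [abs_mul, abs_mul, abs_of_nonneg (hR0 ω), abs_of_nonneg (hY0 ω)]
            exact mul_le_one₀ (mul_le_one₀ (hfb (X ω)) (hR0 ω) (hR1 ω)) (hY0 ω) (hY1 ω)))]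
        rw [← hm_cond f hfm hfb, sub_self]
      have hnn1 : ∀ ω, 0 ≤ f (X ω) * R ω * (m (X ω) - Y ω) := by
        intro ω
        by_cases h : 1 < m (X ω) ∧ m (X ω) ≤ (k : ℝ)
        · simp only [hfdef, if_pos h, one_mul]
          have := hY1 ω
          exact mul_nonneg (hR0 ω) (by linarith [h.1])
        · simp [hfdef, h]
      have e1 := aez (fun ω => f (X ω) * R ω * (m (X ω) - Y ω)) ((k : ℝ) + 2) (((hfm.comp hX).mul hR).mul ((hm.comp hX).sub hY)) (fun ω => hbd ω (R ω) (hR0 ω) (hR1 ω)) hnn1 hz1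
      -- second a.e. zero: with weight (1 - R)
      have hz2 : ∫ ω, f (X ω) * (1 - R ω) * (m (X ω) - Y ω) ∂μ = 0 := by
        rw [hcongr _ (fun ω => f (X ω) * (1 - R ω) * m (X ω) - f (X ω) * (1 - R ω) * Y ω) (fun ω => by ring)]
        rw [integral_sub
          (hbint (fun ω => f (X ω) * (1 - R ω) * m (X ω)) ((k : ℝ) + 1) (((hfm.comp hX).mul (measurable_const.sub hR)).mul (hm.comp hX)) (ae_of_all _ fun ω => by
            by_cases h : 1 < m (X ω) ∧ m (X ω) ≤ (k : ℝ)
            · simp only [hfdef, if_pos h, one_mul]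
              rw [abs_mul, abs_of_nonneg (by linarith [hR1 ω] : (0:ℝ) ≤ 1 - R ω)]
              have h1' := hR0 ω
              have : |m (X ω)| ≤ (k : ℝ) + 1 := by
                rw [abs_le]; constructor <;> [linarith [h.1, hk0]; linarith [h.2, hk0]]
              nlinarith [abs_nonneg (m (X ω)), hR0 ω, hR1 ω]
            · simp only [hfdef, if_neg h, zero_mul, abs_zero]; positivity))
          (hbint (fun ω => f (X ω) * (1 - R ω) * Y ω) 1 (((hfm.comp hX).mul (measurable_const.sub hR)).mul hY) (ae_of_all _ fun ω => by
            rw [abs_mul, abs_mul, abs_of_nonneg (by linarith [hR1 ω] : (0:ℝ) ≤ 1 - R ω), abs_of_nonneg (hY0 ω)]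
            exact mul_le_one₀ (mul_le_one₀ (hfb (X ω)) (by linarith [hR1 ω]) (by linarith [hR0 ω])) (hY0 ω) (hY1 ω)))]
        rw [← hexch f hfm hfb, sub_self]
      have hnn2 : ∀ ω, 0 ≤ f (X ω) * (1 - R ω) * (m (X ω) - Y ω) := by
        intro ω
        by_cases h : 1 < m (X ω) ∧ m (X ω) ≤ (k : ℝ)
        · simp only [hfdef, if_pos h, one_mul]
          have := hY1 ω; have := hR1 ω
          exact mul_nonneg (by linarith) (by linarith [h.1])
        · simp [hfdef, h]
      have e2 := aez (fun ω => f (X ω) * (1 - R ω) * (m (X ω) - Y ω)) ((k : ℝ) + 2) (((hfm.comp hX).mul (measurable_const.sub hR)).mul ((hm.comp hX).sub hY)) (fun ω => hbd ω (1 - R ω) (by linarith [hR1 ω]) (by linarith [hR0 ω])) hnn2 hz2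
      filter_upwards [e1, e2] with ω h1' h2' h
      rw [hfdef] at h1' h2'
      simp only [if_pos h, one_mul] at h1' h2'
      have hsum : m (X ω) - Y ω = R ω * (m (X ω) - Y ω) + (1 - R ω) * (m (X ω) - Y ω) := by ring
      rw [h1', h2'] at hsum
      have := hY1 ω
      linarith [h.1]
    have hall := ae_all_iff.mpr hk
    filter_upwards [hall] with ω hω
    by_contra h
    push_neg at h
    exact hω ⌈m (X ω)⌉₊ ⟨h, Nat.le_ceil _⟩
  -- `0 ≤ m (X ω)` a.e.
  have hmXge : ∀ᵐ ω ∂μ, 0 ≤ m (X ω) := by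
    have hk : ∀ k : ℕ, ∀ᵐ ω ∂μ, ¬(m (X ω) < 0 ∧ -(k : ℝ) ≤ m (X ω)) := by
      intro k
      have hk0 : (0:ℝ) ≤ (k:ℝ) := Nat.cast_nonneg k
      set f : 𝓧 → ℝ := fun x => if m x < 0 ∧ -(k : ℝ) ≤ m x then 1 else 0 with hfdef
      have hfm : Measurable f := by
        apply Measurable.ite _ measurable_const measurable_const
        exact (measurableSet_lt hm measurable_const).inter (measurableSet_le measurable_const hm)
      have hfb : ∀ x, |f x| ≤ 1 := by
        intro x; by_cases h : m x < 0 ∧ -(k : ℝ) ≤ m x <;> simp [hfdef, h]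
      have hbd : ∀ ω (c : ℝ), 0 ≤ c → c ≤ 1 → |f (X ω) * c * (Y ω - m (X ω))| ≤ (k : ℝ) + 2 := by
        intro ω c hc0 hc1
        by_cases h : m (X ω) < 0 ∧ -(k : ℝ) ≤ m (X ω)
        · simp only [hfdef, if_pos h, one_mul]
          rw [abs_mul, abs_of_nonneg hc0]
          have hY0' := hY0 ω; have hY1' := hY1 ω
          have : |Y ω - m (X ω)| ≤ (k : ℝ) + 2 := by
            rw [abs_le]; constructor <;> [linarith [h.2, hk0]; linarith [h.1, hk0]]
          nlinarith [abs_nonneg (Y ω - m (X ω))]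
        · simp only [hfdef, if_neg h, zero_mul, abs_zero]; positivity
      have hz1 : ∫ ω, f (X ω) * R ω * (Y ω - m (X ω)) ∂μ = 0 := by
        rw [hcongr _ (fun ω => f (X ω) * R ω * Y ω - f (X ω) * R ω * m (X ω)) (fun ω => by ring)]
        rw [integral_sub
          (hbint (fun ω => f (X ω) * R ω * Y ω) 1 (((hfm.comp hX).mul hR).mul hY) (ae_of_all _ fun ω => by
            rw [abs_mul, abs_mul, abs_of_nonneg (hR0 ω), abs_of_nonneg (hY0 ω)]
            exact mul_le_one₀ (mul_le_one₀ (hfb (X ω)) (hR0 ω) (hR1 ω)) (hY0 ω) (hY1 ω)))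
          (hbint (fun ω => f (X ω) * R ω * m (X ω)) ((k : ℝ) + 1) (((hfm.comp hX).mul hR).mul (hm.comp hX)) (ae_of_all _ fun ω => by
            by_cases h : m (X ω) < 0 ∧ -(k : ℝ) ≤ m (X ω)
            · simp only [hfdef, if_pos h, one_mul]
              rw [abs_mul, abs_of_nonneg (hR0 ω)]
              have : |m (X ω)| ≤ (k : ℝ) + 1 := by
                rw [abs_le]; constructor <;> [linarith [h.2, hk0]; linarith [h.1, hk0]]
              nlinarith [abs_nonneg (m (X ω)), hR0 ω, hR1 ω]
            · simp only [hfdef, if_neg h, zero_mul, abs_zero]; positivity))]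
        rw [hm_cond f hfm hfb, sub_self]
      have hnn1 : ∀ ω, 0 ≤ f (X ω) * R ω * (Y ω - m (X ω)) := by
        intro ω
        by_cases h : m (X ω) < 0 ∧ -(k : ℝ) ≤ m (X ω)
        · simp only [hfdef, if_pos h, one_mul]
          have := hY0 ω
          exact mul_nonneg (hR0 ω) (by linarith [h.1])
        · simp [hfdef, h]
      have e1 := aez (fun ω => f (X ω) * R ω * (Y ω - m (X ω))) ((k : ℝ) + 2) (((hfm.comp hX).mul hR).mul (hY.sub (hm.comp hX))) (fun ω => hbd ω (R ω) (hR0 ω) (hR1 ω)) hnn1 hz1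
      have hz2 : ∫ ω, f (X ω) * (1 - R ω) * (Y ω - m (X ω)) ∂μ = 0 := by
        rw [hcongr _ (fun ω => f (X ω) * (1 - R ω) * Y ω - f (X ω) * (1 - R ω) * m (X ω)) (fun ω => by ring)]
        rw [integral_sub
          (hbint (fun ω => f (X ω) * (1 - R ω) * Y ω) 1 (((hfm.comp hX).mul (measurable_const.sub hR)).mul hY) (ae_of_all _ fun ω => by
            rw [abs_mul, abs_mul, abs_of_nonneg (by linarith [hR1 ω] : (0:ℝ) ≤ 1 - R ω), abs_of_nonneg (hY0 ω)]
            exact mul_le_one₀ (mul_le_one₀ (hfb (X ω)) (by linarith [hR1 ω]) (by linarith [hR0 ω])) (hY0 ω) (hY1 ω)))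
          (hbint (fun ω => f (X ω) * (1 - R ω) * m (X ω)) ((k : ℝ) + 1) (((hfm.comp hX).mul (measurable_const.sub hR)).mul (hm.comp hX)) (ae_of_all _ fun ω => by
            by_cases h : m (X ω) < 0 ∧ -(k : ℝ) ≤ m (X ω)
            · simp only [hfdef, if_pos h, one_mul]
              rw [abs_mul, abs_of_nonneg (by linarith [hR1 ω] : (0:ℝ) ≤ 1 - R ω)]
              have : |m (X ω)| ≤ (k : ℝ) + 1 := by
                rw [abs_le]; constructor <;> [linarith [h.2, hk0]; linarith [h.1, hk0]]
              nlinarith [abs_nonneg (m (X ω)), hR0 ω, hR1 ω]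
            · simp only [hfdef, if_neg h, zero_mul, abs_zero]; positivity))]
        rw [hexch f hfm hfb, sub_self]
      have hnn2 : ∀ ω, 0 ≤ f (X ω) * (1 - R ω) * (Y ω - m (X ω)) := by
        intro ω
        by_cases h : m (X ω) < 0 ∧ -(k : ℝ) ≤ m (X ω)
        · simp only [hfdef, if_pos h, one_mul]
          have := hY0 ω; have := hR1 ω
          exact mul_nonneg (by linarith) (by linarith [h.1])
        · simp [hfdef, h]
      have e2 := aez (fun ω => f (X ω) * (1 - R ω) * (Y ω - m (X ω))) ((k : ℝ) + 2) (((hfm.comp hX).mul (measurable_const.sub hR)).mul (hY.sub (hm.comp hX))) (fun ω => hbd ω (1 - R ω) (by linarith [hR1 ω]) (by linarith [hR0 ω])) hnn2 hz2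
      filter_upwards [e1, e2] with ω h1' h2' h
      rw [hfdef] at h1' h2'
      simp only [if_pos h, one_mul] at h1' h2'
      have hsum : Y ω - m (X ω) = R ω * (Y ω - m (X ω)) + (1 - R ω) * (Y ω - m (X ω)) := by ring
      rw [h1', h2'] at hsum
      have := hY0 ω
      linarith [h.1]
    have hall := ae_all_iff.mpr hk
    filter_upwards [hall] with ω hω
    by_contra h
    push_neg at h
    exact hω ⌈-m (X ω)⌉₊ ⟨h, by linarith [Nat.le_ceil (-m (X ω))]⟩
  -- truncation of `m` agrees a.e.
  have hmM : ∀ᵐ ω ∂μ, m (X ω) = max 0 (min (m (X ω)) 1) := by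
    filter_upwards [hmXge, hmXle] with ω h0 h1
    rw [min_eq_left h1, max_eq_right h0]
  -- the inverse-odds weight is nonnegative a.e., and `w * p = 1 - p` a.e.
  have hwnn : ∀ᵐ ω ∂μ, 0 ≤ (1 - p (X ω)) / p (X ω) := by
    filter_upwards [hpXpos, hpXle] with ω h1 h2
    exact div_nonneg (by linarith) h1.le
  have hwp : ∀ᵐ ω ∂μ, (1 - p (X ω)) / p (X ω) * p (X ω) = 1 - p (X ω) := by
    filter_upwards [hpXpos] with ω h1
    exact div_mul_cancel₀ _ (ne_of_gt h1)
  -- measurability shorthands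
  have hwm : Measurable fun x => (1 - p x) / p x := (measurable_const.sub hp).div hp
  have hMm : Measurable fun x => max 0 (min (m x) 1) := measurable_const.max (hm.min measurable_const)
  have hM0 : ∀ x, (0:ℝ) ≤ max 0 (min (m x) 1) := fun x => le_max_left _ _
  have hM1 : ∀ x, max 0 (min (m x) 1) ≤ 1 := fun x => max_le zero_le_one (min_le_right _ _)
  have hcm : ∀ n : ℕ, Measurable fun x => max 0 (min ((1 - p x) / p x) (n : ℝ)) :=
    fun n => measurable_const.max (hwm.min measurable_const)
  -- integrability of the dominating function (forced by `hden`)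
  have hDint : Integrable (fun ω => (1 - p (X ω)) / p (X ω) * Y ω * R ω) μ := by
    by_contra h
    rw [integral_undef h] at hden
    exact lt_irrefl 0 hden
  -- the key identity, for any measurable `f` bounded by 1
  have key : ∀ f : 𝓧 → ℝ, Measurable f → (∀ x, |f x| ≤ 1) →
      ∫ ω, (1 - R ω) * f (X ω) * Y ω ∂μ
        = ∫ ω, (1 - p (X ω)) / p (X ω) * f (X ω) * Y ω * R ω ∂μ := by
    intro f hf hfb
    have hfM : Measurable fun x => f x * max 0 (min (m x) 1) := hf.mul hMm
    have hfMb : ∀ x, |f x * max 0 (min (m x) 1)| ≤ 1 := by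
      intro x
      rw [abs_mul, abs_of_nonneg (hM0 x)]
      nlinarith [hfb x, abs_nonneg (f x), hM0 x, hM1 x]
    -- integrability of the bounded pieces
    have intA : Integrable (fun ω => f (X ω) * max 0 (min (m (X ω)) 1)) μ :=
      hbint (fun ω => f (X ω) * max 0 (min (m (X ω)) 1)) 1 (hfM.comp hX) (ae_of_all _ fun ω => hfMb (X ω))
    have intB : Integrable (fun ω => f (X ω) * max 0 (min (m (X ω)) 1) * p (X ω)) μ :=
      hbint (fun ω => f (X ω) * max 0 (min (m (X ω)) 1) * p (X ω)) 1 ((hfM.comp hX).mul (hp.comp hX)) (by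
        filter_upwards [hpXpos, hpXle] with ω h1 h2
        rw [abs_mul, abs_of_nonneg h1.le]
        nlinarith [hfMb (X ω), abs_nonneg (f (X ω) * max 0 (min (m (X ω)) 1))])
    -- Left-hand side chain
    have L : ∫ ω, (1 - R ω) * f (X ω) * Y ω ∂μ
        = ∫ ω, f (X ω) * max 0 (min (m (X ω)) 1) * (1 - p (X ω)) ∂μ := by
      have L1 : ∫ ω, (1 - R ω) * f (X ω) * Y ω ∂μ = ∫ ω, f (X ω) * (1 - R ω) * m (X ω) ∂μ := by
        rw [← hexch f hf hfb]
        exact hcongr _ _ fun ω => by ring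
      have L2 : ∫ ω, f (X ω) * (1 - R ω) * m (X ω) ∂μ
          = ∫ ω, f (X ω) * max 0 (min (m (X ω)) 1) * (1 - R ω) ∂μ := by
        apply integral_congr_ae
        filter_upwards [hmM] with ω h
        rw [← h]; ring
      have intC : Integrable (fun ω => f (X ω) * max 0 (min (m (X ω)) 1) * R ω) μ :=
        hbint (fun ω => f (X ω) * max 0 (min (m (X ω)) 1) * R ω) 1 ((hfM.comp hX).mul hR) (ae_of_all _ fun ω => by
          rw [abs_mul, abs_of_nonneg (hR0 ω)]
          nlinarith [hfMb (X ω), abs_nonneg (f (X ω) * max 0 (min (m (X ω)) 1)), hR0 ω, hR1 ω])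
      have L3 : ∫ ω, f (X ω) * max 0 (min (m (X ω)) 1) * (1 - R ω) ∂μ
          = ∫ ω, f (X ω) * max 0 (min (m (X ω)) 1) ∂μ
            - ∫ ω, f (X ω) * max 0 (min (m (X ω)) 1) * R ω ∂μ := by
        rw [hcongr _ (fun ω => f (X ω) * max 0 (min (m (X ω)) 1)
            - f (X ω) * max 0 (min (m (X ω)) 1) * R ω) (fun ω => by ring)]
        exact integral_sub intA intC
      have L4 : ∫ ω, f (X ω) * max 0 (min (m (X ω)) 1) * R ω ∂μ
          = ∫ ω, f (X ω) * max 0 (min (m (X ω)) 1) * p (X ω) ∂μ :=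
        hp_cond (fun x => f x * max 0 (min (m x) 1)) hfM hfMb
      rw [L1, L2, L3, L4, ← integral_sub intA intB]
      exact hcongr _ _ fun ω => by ring
    -- Right-hand side chain, via truncation of the weight
    -- equality at each truncation level
    have R1 : ∀ n : ℕ,
        ∫ ω, max 0 (min ((1 - p (X ω)) / p (X ω)) (n : ℝ)) * f (X ω) * R ω * Y ω ∂μ
          = ∫ ω, max 0 (min ((1 - p (X ω)) / p (X ω)) (n : ℝ)) * f (X ω)
              * max 0 (min (m (X ω)) 1) * p (X ω) ∂μ := by
      intro n
      have hne : ((n : ℝ) + 1) ≠ 0 := by positivity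
      have hc0 : ∀ x, (0:ℝ) ≤ max 0 (min ((1 - p x) / p x) (n : ℝ)) := fun x => le_max_left _ _
      have hcn : ∀ x, max 0 (min ((1 - p x) / p x) (n : ℝ)) ≤ (n : ℝ) :=
        fun x => max_le (Nat.cast_nonneg n) (min_le_right _ _)
      -- step (a): apply hm_cond to the scaled truncated weight
      have hfn1 : Measurable fun x => max 0 (min ((1 - p x) / p x) (n : ℝ)) * f x / ((n : ℝ) + 1) :=
        ((hcm n).mul hf).div_const _
      have hfn1b : ∀ x, |max 0 (min ((1 - p x) / p x) (n : ℝ)) * f x / ((n : ℝ) + 1)| ≤ 1 := by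
        intro x
        rw [abs_div, abs_mul, abs_of_nonneg (hc0 x),
          abs_of_nonneg (by positivity : (0:ℝ) ≤ (n : ℝ) + 1), div_le_one (by positivity)]
        nlinarith [hfb x, abs_nonneg (f x), hc0 x, hcn x]
      have ha : ∫ ω, max 0 (min ((1 - p (X ω)) / p (X ω)) (n : ℝ)) * f (X ω) / ((n : ℝ) + 1) * R ω * Y ω ∂μ
          = ∫ ω, max 0 (min ((1 - p (X ω)) / p (X ω)) (n : ℝ)) * f (X ω) / ((n : ℝ) + 1) * R ω * m (X ω) ∂μ :=
        hm_cond _ hfn1 hfn1b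
      have ha' : ∫ ω, max 0 (min ((1 - p (X ω)) / p (X ω)) (n : ℝ)) * f (X ω) * R ω * Y ω ∂μ
          = ∫ ω, max 0 (min ((1 - p (X ω)) / p (X ω)) (n : ℝ)) * f (X ω) * R ω * m (X ω) ∂μ := by
        apply mul_left_cancel₀ (inv_ne_zero hne)
        calc ((n : ℝ) + 1)⁻¹ * ∫ ω, max 0 (min ((1 - p (X ω)) / p (X ω)) (n : ℝ)) * f (X ω) * R ω * Y ω ∂μ
            = ∫ ω, max 0 (min ((1 - p (X ω)) / p (X ω)) (n : ℝ)) * f (X ω) / ((n : ℝ) + 1) * R ω * Y ω ∂μ := by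
              rw [← integral_const_mul]; exact hcongr _ _ fun ω => by ring
          _ = ∫ ω, max 0 (min ((1 - p (X ω)) / p (X ω)) (n : ℝ)) * f (X ω) / ((n : ℝ) + 1) * R ω * m (X ω) ∂μ := ha
          _ = ((n : ℝ) + 1)⁻¹ * ∫ ω, max 0 (min ((1 - p (X ω)) / p (X ω)) (n : ℝ)) * f (X ω) * R ω * m (X ω) ∂μ := by
              rw [← integral_const_mul]; exact hcongr _ _ fun ω => by ring
      -- step (b): replace m by its truncation
      have hb' : ∫ ω, max 0 (min ((1 - p (X ω)) / p (X ω)) (n : ℝ)) * f (X ω) * R ω * m (X ω) ∂μ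
          = ∫ ω, max 0 (min ((1 - p (X ω)) / p (X ω)) (n : ℝ)) * f (X ω) * max 0 (min (m (X ω)) 1) * R ω ∂μ := by
        apply integral_congr_ae
        filter_upwards [hmM] with ω h
        rw [← h]; ring
      -- step (c): apply hp_cond to the scaled truncated weight times f times truncated m
      have hfn2 : Measurable fun x => max 0 (min ((1 - p x) / p x) (n : ℝ)) * f x * max 0 (min (m x) 1) / ((n : ℝ) + 1) :=
        (((hcm n).mul hf).mul hMm).div_const _
      have hfn2b : ∀ x, |max 0 (min ((1 - p x) / p x) (n : ℝ)) * f x * max 0 (min (m x) 1) / ((n : ℝ) + 1)| ≤ 1 := by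
        intro x
        rw [abs_div, abs_mul, abs_mul, abs_of_nonneg (hc0 x), abs_of_nonneg (hM0 x),
          abs_of_nonneg (by positivity : (0:ℝ) ≤ (n : ℝ) + 1), div_le_one (by positivity)]
        have s1 := mul_le_of_le_one_right (mul_nonneg (hc0 x) (abs_nonneg (f x))) (hM1 x)
        have s2 := mul_le_of_le_one_right (hc0 x) (hfb x)
        linarith [hcn x]
      have hc : ∫ ω, max 0 (min ((1 - p (X ω)) / p (X ω)) (n : ℝ)) * f (X ω) * max 0 (min (m (X ω)) 1) / ((n : ℝ) + 1) * R ω ∂μ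
          = ∫ ω, max 0 (min ((1 - p (X ω)) / p (X ω)) (n : ℝ)) * f (X ω) * max 0 (min (m (X ω)) 1) / ((n : ℝ) + 1) * p (X ω) ∂μ :=
        hp_cond _ hfn2 hfn2b
      have hc' : ∫ ω, max 0 (min ((1 - p (X ω)) / p (X ω)) (n : ℝ)) * f (X ω) * max 0 (min (m (X ω)) 1) * R ω ∂μ
          = ∫ ω, max 0 (min ((1 - p (X ω)) / p (X ω)) (n : ℝ)) * f (X ω) * max 0 (min (m (X ω)) 1) * p (X ω) ∂μ := by
        apply mul_left_cancel₀ (inv_ne_zero hne)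
        calc ((n : ℝ) + 1)⁻¹ * ∫ ω, max 0 (min ((1 - p (X ω)) / p (X ω)) (n : ℝ)) * f (X ω) * max 0 (min (m (X ω)) 1) * R ω ∂μ
            = ∫ ω, max 0 (min ((1 - p (X ω)) / p (X ω)) (n : ℝ)) * f (X ω) * max 0 (min (m (X ω)) 1) / ((n : ℝ) + 1) * R ω ∂μ := by
              rw [← integral_const_mul]; exact hcongr _ _ fun ω => by ring
          _ = ∫ ω, max 0 (min ((1 - p (X ω)) / p (X ω)) (n : ℝ)) * f (X ω) * max 0 (min (m (X ω)) 1) / ((n : ℝ) + 1) * p (X ω) ∂μ := hc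
          _ = ((n : ℝ) + 1)⁻¹ * ∫ ω, max 0 (min ((1 - p (X ω)) / p (X ω)) (n : ℝ)) * f (X ω) * max 0 (min (m (X ω)) 1) * p (X ω) ∂μ := by
              rw [← integral_const_mul]; exact hcongr _ _ fun ω => by ring
      rw [ha', hb', hc']
    -- convergence of the truncated weight
    have hcv : ∀ᵐ ω ∂μ, Tendsto (fun n : ℕ => max 0 (min ((1 - p (X ω)) / p (X ω)) (n : ℝ)))
        atTop (𝓝 ((1 - p (X ω)) / p (X ω))) := by
      filter_upwards [hwnn] with ω hw
      apply tendsto_atTop_of_eventually_const (i₀ := ⌈(1 - p (X ω)) / p (X ω)⌉₊)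
      intro n hn
      rw [min_eq_left ((Nat.le_ceil _).trans (by exact_mod_cast hn)), max_eq_right hw]
    -- first dominated convergence: towards the target integral
    have htend1 : Tendsto (fun n : ℕ =>
        ∫ ω, max 0 (min ((1 - p (X ω)) / p (X ω)) (n : ℝ)) * f (X ω) * R ω * Y ω ∂μ) atTop
        (𝓝 (∫ ω, (1 - p (X ω)) / p (X ω) * f (X ω) * Y ω * R ω ∂μ)) := by
      apply tendsto_integral_of_dominated_convergence (fun ω => (1 - p (X ω)) / p (X ω) * Y ω * R ω)
      · intro n
        exact (((((hcm n).comp hX).mul (hf.comp hX)).mul hR).mul hY).aestronglyMeasurable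
      · exact hDint
      · intro n
        filter_upwards [hwnn] with ω hw
        have hc1 : max 0 (min ((1 - p (X ω)) / p (X ω)) (n : ℝ)) ≤ (1 - p (X ω)) / p (X ω) :=
          max_le hw (min_le_left _ _)
        have hc0 : (0:ℝ) ≤ max 0 (min ((1 - p (X ω)) / p (X ω)) (n : ℝ)) := le_max_left _ _
        rw [Real.norm_eq_abs, abs_mul, abs_mul, abs_mul, abs_of_nonneg hc0,
          abs_of_nonneg (hR0 ω), abs_of_nonneg (hY0 ω)]
        have h1 : max 0 (min ((1 - p (X ω)) / p (X ω)) (n : ℝ)) * |f (X ω)| * R ω * Y ω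
            ≤ max 0 (min ((1 - p (X ω)) / p (X ω)) (n : ℝ)) * R ω * Y ω := by
          nlinarith [mul_nonneg (mul_nonneg hc0 (hR0 ω)) (hY0 ω), hfb (X ω), hR0 ω, hY0 ω,
            mul_nonneg (hR0 ω) (hY0 ω)]
        have h2 : max 0 (min ((1 - p (X ω)) / p (X ω)) (n : ℝ)) * R ω * Y ω
            ≤ (1 - p (X ω)) / p (X ω) * Y ω * R ω := by
          nlinarith [mul_nonneg (hR0 ω) (hY0 ω), sub_nonneg.mpr hc1]
        linarith
      · filter_upwards [hcv, hwnn] with ω hcvω hw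
        have h : Tendsto (fun n : ℕ => max 0 (min ((1 - p (X ω)) / p (X ω)) (n : ℝ)) * f (X ω) * R ω * Y ω)
            atTop (𝓝 ((1 - p (X ω)) / p (X ω) * f (X ω) * R ω * Y ω)) :=
          ((hcvω.mul tendsto_const_nhds).mul tendsto_const_nhds).mul tendsto_const_nhds
        have heq : (1 - p (X ω)) / p (X ω) * f (X ω) * Y ω * R ω
            = (1 - p (X ω)) / p (X ω) * f (X ω) * R ω * Y ω := by ring
        rw [heq]
        exact h
    -- second dominated convergence: towards the reweighted integral
    have htend3 : Tendsto (fun n : ℕ =>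
        ∫ ω, max 0 (min ((1 - p (X ω)) / p (X ω)) (n : ℝ)) * f (X ω) * max 0 (min (m (X ω)) 1) * p (X ω) ∂μ) atTop
        (𝓝 (∫ ω, (1 - p (X ω)) / p (X ω) * f (X ω) * max 0 (min (m (X ω)) 1) * p (X ω) ∂μ)) := by
      apply tendsto_integral_of_dominated_convergence (fun _ => (1 : ℝ))
      · intro n
        exact (((((hcm n).comp hX).mul (hf.comp hX)).mul (hMm.comp hX)).mul (hp.comp hX)).aestronglyMeasurable
      · exact integrable_const 1
      · intro n
        filter_upwards [hwnn, hwp, hpXpos, hpXle] with ω hw hwpω hp0 hp1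
        have hc1 : max 0 (min ((1 - p (X ω)) / p (X ω)) (n : ℝ)) ≤ (1 - p (X ω)) / p (X ω) :=
          max_le hw (min_le_left _ _)
        have hc0 : (0:ℝ) ≤ max 0 (min ((1 - p (X ω)) / p (X ω)) (n : ℝ)) := le_max_left _ _
        rw [Real.norm_eq_abs, abs_mul, abs_mul, abs_mul, abs_of_nonneg hc0,
          abs_of_nonneg (hM0 (X ω)), abs_of_nonneg hp0.le]
        have h1 : max 0 (min ((1 - p (X ω)) / p (X ω)) (n : ℝ)) * |f (X ω)| * max 0 (min (m (X ω)) 1) * p (X ω)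
            ≤ max 0 (min ((1 - p (X ω)) / p (X ω)) (n : ℝ)) * p (X ω) := by
          nlinarith [mul_nonneg hc0 hp0.le, hfb (X ω), abs_nonneg (f (X ω)), hM0 (X ω), hM1 (X ω),
            mul_nonneg (mul_nonneg hc0 (abs_nonneg (f (X ω)))) hp0.le,
            mul_nonneg (mul_nonneg (mul_nonneg hc0 (abs_nonneg (f (X ω)))) (hM0 (X ω))) hp0.le]
        have h2 : max 0 (min ((1 - p (X ω)) / p (X ω)) (n : ℝ)) * p (X ω)
            ≤ (1 - p (X ω)) / p (X ω) * p (X ω) :=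
          mul_le_mul_of_nonneg_right hc1 hp0.le
        rw [hwpω] at h2
        linarith
      · filter_upwards [hcv] with ω hcvω
        exact Tendsto.mul (Tendsto.mul (Tendsto.mul hcvω
          (tendsto_const_nhds : Tendsto (fun _ : ℕ => f (X ω)) atTop (𝓝 (f (X ω)))))
          (tendsto_const_nhds : Tendsto (fun _ : ℕ => max 0 (min (m (X ω)) 1)) atTop (𝓝 (max 0 (min (m (X ω)) 1)))))
          (tendsto_const_nhds : Tendsto (fun _ : ℕ => p (X ω)) atTop (𝓝 (p (X ω))))
    -- identify the limits
    have hteq : ∫ ω, (1 - p (X ω)) / p (X ω) * f (X ω) * Y ω * R ω ∂μ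
        = ∫ ω, (1 - p (X ω)) / p (X ω) * f (X ω) * max 0 (min (m (X ω)) 1) * p (X ω) ∂μ := by
      refine tendsto_nhds_unique ?_ htend3
      have e : (fun n : ℕ => ∫ ω, max 0 (min ((1 - p (X ω)) / p (X ω)) (n : ℝ)) * f (X ω) * R ω * Y ω ∂μ)
          = fun n : ℕ => ∫ ω, max 0 (min ((1 - p (X ω)) / p (X ω)) (n : ℝ)) * f (X ω)
              * max 0 (min (m (X ω)) 1) * p (X ω) ∂μ := funext R1
      rw [← e]
      exact htend1
    have R5 : ∫ ω, (1 - p (X ω)) / p (X ω) * f (X ω) * max 0 (min (m (X ω)) 1) * p (X ω) ∂μ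
        = ∫ ω, f (X ω) * max 0 (min (m (X ω)) 1) * (1 - p (X ω)) ∂μ := by
      apply integral_congr_ae
      filter_upwards [hwp] with ω hwpω
      calc (1 - p (X ω)) / p (X ω) * f (X ω) * max 0 (min (m (X ω)) 1) * p (X ω)
          = f (X ω) * max 0 (min (m (X ω)) 1) * ((1 - p (X ω)) / p (X ω) * p (X ω)) := by ring
        _ = f (X ω) * max 0 (min (m (X ω)) 1) * (1 - p (X ω)) := by rw [hwpω]
    rw [L, hteq, R5]
  -- conclude
  have hnum := key g hg (fun x => by rcases hgbin x with h | h <;> rw [h] <;> norm_num)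
  have hden' := key (fun _ => 1) measurable_const (fun x => by norm_num)
  simp only [mul_one, one_mul] at hden'
  rw [hnum, hden']
end

section
/- Let (X,Y,R) satisfy Y ⟂ R | X and positivity, and suppose Pr[g(X)=1, R=0] > 0. Then Pr[Y=1 | g(X)=1, R=0] = E[ (Pr[R=0|X]/Pr[R=1|X]) · I(g(X)=1, Y=1, R=1) ] / E[ I(R=0) I(g(X)=1) ]. -/
open MeasureTheory Real Filter



lemma ppv_abs3 {a b c A : ℝ} (ha : |a| ≤ 1) (hb : |b| ≤ 1) (hc : |c| ≤ A) :
    |a * (b * c)| ≤ A := by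
  have hA : 0 ≤ A := (abs_nonneg c).trans hc
  have h : |a * (b * c)| = |a| * (|b| * |c|) := by rw [abs_mul, abs_mul]
  rw [h]
  calc |a| * (|b| * |c|) ≤ 1 * (1 * A) := by
        apply mul_le_mul ha _ (by positivity) zero_le_one
        exact mul_le_mul hb hc (abs_nonneg c) zero_le_one
    _ = A := by ring

/-- Scaling: a conditional-expectation identity stated for `|f| ≤ 1` extends to any bound. -/
lemma ppv_scale_aux {Ω 𝓧 : Type*} [MeasurableSpace Ω] [MeasurableSpace 𝓧]
    (μ : Measure Ω) (X : Ω → 𝓧) (u v : Ω → ℝ)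
    (H : ∀ f : 𝓧 → ℝ, Measurable f → (∀ x, |f x| ≤ 1) →
      ∫ ω, f (X ω) * u ω ∂μ = ∫ ω, f (X ω) * v ω ∂μ)
    (f : 𝓧 → ℝ) (hf : Measurable f) (c : ℝ) (hfb : ∀ x, |f x| ≤ c) :
    ∫ ω, f (X ω) * u ω ∂μ = ∫ ω, f (X ω) * v ω ∂μ := by
  rcases le_or_gt c 0 with hc | hc
  · have hf0 : ∀ x, f x = 0 := fun x =>
      abs_eq_zero.mp (le_antisymm ((hfb x).trans hc) (abs_nonneg _))
    simp [hf0]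
  · have h := H (fun x => f x * c⁻¹) (hf.mul_const _) (fun x => by
      rw [abs_mul, abs_inv, abs_of_pos hc]
      rw [mul_inv_le_iff₀ hc, one_mul]
      exact hfb x)
    simp only [show ∀ (a b : ℝ), a * c⁻¹ * b = c⁻¹ * (a * b) by intros; ring] at h
    rw [MeasureTheory.integral_const_mul, MeasureTheory.integral_const_mul] at h
    exact mul_left_cancel₀ (inv_ne_zero hc.ne') h

/-- If `q∘X` is a version of `E[y | ...]` on the event `u = 1` (with `u, y` binary),
then `q∘X ∈ [0,1]` a.e. on `{u = 1}`. -/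
lemma ppv_bound_aux {Ω 𝓧 : Type*} [MeasurableSpace Ω] [MeasurableSpace 𝓧]
    (μ : Measure Ω) [IsProbabilityMeasure μ] (X : Ω → 𝓧) (u y : Ω → ℝ) (q : 𝓧 → ℝ)
    (hX : Measurable X) (hu : Measurable u) (hy : Measurable y) (hq : Measurable q)
    (hub : ∀ ω, u ω = 0 ∨ u ω = 1) (hyb : ∀ ω, y ω = 0 ∨ y ω = 1)
    (H : ∀ f : 𝓧 → ℝ, Measurable f → (∀ x, |f x| ≤ 1) →
      ∫ ω, f (X ω) * (u ω * y ω) ∂μ = ∫ ω, f (X ω) * (u ω * q (X ω)) ∂μ) :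
    ∀ᵐ ω ∂μ, u ω = 1 → 0 ≤ q (X ω) ∧ q (X ω) ≤ 1 := by
  have hu01 : ∀ ω, 0 ≤ u ω ∧ u ω ≤ 1 := fun ω => by rcases hub ω with h | h <;> simp [h]
  have hy01 : ∀ ω, 0 ≤ y ω ∧ y ω ≤ 1 := fun ω => by rcases hyb ω with h | h <;> simp [h]
  -- lower bound
  have low : ∀ n : ℕ, ∀ᵐ ω ∂μ, ¬(u ω = 1 ∧ q (X ω) < 0 ∧ -(n : ℝ) ≤ q (X ω)) := by
    intro n
    set S : Set 𝓧 := {x | q x < 0 ∧ -(n : ℝ) ≤ q x} with hSdef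
    have hS : MeasurableSet S :=
      (measurableSet_lt hq measurable_const).inter (measurableSet_le measurable_const hq)
    set f : 𝓧 → ℝ := S.indicator (fun _ => 1) with hfdef
    have hfm : Measurable f := measurable_const.indicator hS
    have hfb : ∀ x, |f x| ≤ 1 := fun x => by
      by_cases hx : x ∈ S <;> simp [hfdef, hx]
    have hf01 : ∀ x, 0 ≤ f x ∧ f x ≤ 1 := fun x => by
      by_cases hx : x ∈ S <;> simp [hfdef, hx]
    have h := H f hfm hfb
    -- RHS integrand is nonpositive, integrable; LHS integral nonneg
    set G : Ω → ℝ := fun ω => f (X ω) * (u ω * q (X ω)) with hGdef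
    have hGle : ∀ ω, G ω ≤ 0 := by
      intro ω
      by_cases hx : X ω ∈ S
      · have : q (X ω) < 0 := hx.1
        have := mul_nonpos_of_nonneg_of_nonpos (hu01 ω).1 this.le
        exact mul_nonpos_of_nonneg_of_nonpos (hf01 _).1 this
      · simp [hGdef, hfdef, Set.indicator_of_notMem hx]
    have hGmeas : Measurable G := ((hfm.comp hX).mul (hu.mul (hq.comp hX)))
    have hGint : Integrable G μ := by
      refine (integrable_const (n : ℝ)).mono' hGmeas.aestronglyMeasurable (ae_of_all _ ?_)
      intro ω
      by_cases hx : X ω ∈ S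
      · have h1 : |q (X ω)| ≤ (n : ℝ) := abs_le.mpr ⟨by linarith [hx.2], by linarith [hx.1]⟩
        exact ppv_abs3 (hfb _) (abs_le.mpr ⟨by linarith [(hu01 ω).1], (hu01 ω).2⟩) h1
      · simp [hGdef, hfdef, Set.indicator_of_notMem hx, Nat.cast_nonneg]
    have hnonneg : 0 ≤ ∫ ω, f (X ω) * (u ω * y ω) ∂μ :=
      integral_nonneg fun ω => mul_nonneg (hf01 _).1 (mul_nonneg (hu01 ω).1 (hy01 ω).1)
    have hG0 : ∫ ω, -G ω ∂μ = 0 := by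
      rw [integral_neg]
      have : ∫ ω, G ω ∂μ = 0 := le_antisymm (integral_nonpos (fun ω => hGle ω)) (h ▸ hnonneg)
      rw [this, neg_zero]
    have := (integral_eq_zero_iff_of_nonneg (fun ω => neg_nonneg.mpr (hGle ω))
      hGint.neg).mp hG0
    filter_upwards [this] with ω hω
    rintro ⟨hu1, hq0, hqn⟩
    have hx : X ω ∈ S := ⟨hq0, hqn⟩
    have : G ω = q (X ω) := by simp [hGdef, hfdef, Set.indicator_of_mem hx, hu1]
    have : G ω < 0 := this ▸ hq0
    simp only [Pi.zero_apply, neg_eq_zero] at hω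
    exact absurd hω this.ne
  -- upper bound
  have high : ∀ n : ℕ, ∀ᵐ ω ∂μ, ¬(u ω = 1 ∧ 1 < q (X ω) ∧ q (X ω) ≤ (n : ℝ)) := by
    intro n
    set S : Set 𝓧 := {x | 1 < q x ∧ q x ≤ (n : ℝ)} with hSdef
    have hS : MeasurableSet S :=
      (measurableSet_lt measurable_const hq).inter (measurableSet_le hq measurable_const)
    set f : 𝓧 → ℝ := S.indicator (fun _ => 1) with hfdef
    have hfm : Measurable f := measurable_const.indicator hS
    have hfb : ∀ x, |f x| ≤ 1 := fun x => by
      by_cases hx : x ∈ S <;> simp [hfdef, hx]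
    have hf01 : ∀ x, 0 ≤ f x ∧ f x ≤ 1 := fun x => by
      by_cases hx : x ∈ S <;> simp [hfdef, hx]
    have h := H f hfm hfb
    set G : Ω → ℝ := fun ω => f (X ω) * (u ω * (q (X ω) - y ω)) with hGdef
    have hGge : ∀ ω, 0 ≤ G ω := by
      intro ω
      by_cases hx : X ω ∈ S
      · have : 0 ≤ q (X ω) - y ω := by have := hx.1; have := (hy01 ω).2; linarith
        exact mul_nonneg (hf01 _).1 (mul_nonneg (hu01 ω).1 this)
      · simp [hGdef, hfdef, Set.indicator_of_notMem hx]
    have hGmeas : Measurable G :=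
      (hfm.comp hX).mul (hu.mul ((hq.comp hX).sub hy))
    have hGint : Integrable G μ := by
      refine (integrable_const ((n : ℝ) + 1)).mono' hGmeas.aestronglyMeasurable (ae_of_all _ ?_)
      intro ω
      by_cases hx : X ω ∈ S
      · have h1 : |q (X ω) - y ω| ≤ (n : ℝ) + 1 := by
          have := hx.1; have := hx.2; have := (hy01 ω).1; have := (hy01 ω).2
          rw [abs_le]; constructor <;> nlinarith
        exact ppv_abs3 (hfb _) (abs_le.mpr ⟨by linarith [(hu01 ω).1], (hu01 ω).2⟩) h1
      · simp [hGdef, hfdef, Set.indicator_of_notMem hx]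
        positivity
    -- ∫ G = ∫ f u q - ∫ f u y = 0
    have hint1 : Integrable (fun ω => f (X ω) * (u ω * q (X ω))) μ := by
      refine (integrable_const ((n : ℝ) + 1)).mono'
        ((hfm.comp hX).mul (hu.mul (hq.comp hX))).aestronglyMeasurable (ae_of_all _ ?_)
      intro ω
      by_cases hx : X ω ∈ S
      · have h1 : |q (X ω)| ≤ (n : ℝ) + 1 := by
          have := hx.1; have := hx.2; rw [abs_le]; constructor <;> linarith
        exact ppv_abs3 (hfb _) (abs_le.mpr ⟨by linarith [(hu01 ω).1], (hu01 ω).2⟩) h1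
      · simp [hfdef, Set.indicator_of_notMem hx]; positivity
    have hint2 : Integrable (fun ω => f (X ω) * (u ω * y ω)) μ := by
      refine (integrable_const (1 : ℝ)).mono'
        ((hfm.comp hX).mul (hu.mul hy)).aestronglyMeasurable (ae_of_all _ ?_)
      intro ω
      exact ppv_abs3 (hfb _) (abs_le.mpr ⟨by linarith [(hu01 ω).1], (hu01 ω).2⟩)
        (abs_le.mpr ⟨by linarith [(hy01 ω).1], (hy01 ω).2⟩)
    have hG0 : ∫ ω, G ω ∂μ = 0 := by
      have hGeq : ∀ ω, G ω = f (X ω) * (u ω * q (X ω)) - f (X ω) * (u ω * y ω) := by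
        intro ω; rw [hGdef]; ring
      simp only [hGeq]
      rw [integral_sub hint1 hint2, ← h, sub_self]
    have := (integral_eq_zero_iff_of_nonneg (fun ω => hGge ω) hGint).mp hG0
    filter_upwards [this] with ω hω
    rintro ⟨hu1, hq1, hqn⟩
    have hx : X ω ∈ S := ⟨hq1, hqn⟩
    have hGval : G ω = q (X ω) - y ω := by simp [hGdef, hfdef, Set.indicator_of_mem hx, hu1]
    have : 0 < G ω := by rw [hGval]; have := (hy01 ω).2; linarith
    simp only [Pi.zero_apply] at hω
    exact absurd hω this.ne'
  rw [← ae_all_iff] at low high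
  filter_upwards [low, high] with ω hlow hhigh hu1
  constructor
  · by_contra hq0
    push_neg at hq0
    obtain ⟨n, hn⟩ := exists_nat_ge (-q (X ω))
    exact hlow n ⟨hu1, hq0, by linarith⟩
  · by_contra hq1
    push_neg at hq1
    obtain ⟨n, hn⟩ := exists_nat_ge (q (X ω))
    exact hhigh n ⟨hu1, hq1, hn⟩

lemma ppv_absmul {a b C : ℝ} (ha : |a| ≤ C) (hb : |b| ≤ 1) : |a * b| ≤ C := by
  rw [abs_mul]
  calc |a| * |b| ≤ C * 1 := mul_le_mul ha hb (abs_nonneg _) ((abs_nonneg a).trans ha)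
    _ = C := mul_one C

lemma ppv_abs01 {x : ℝ} (h1 : 0 ≤ x) (h2 : x ≤ 1) : |x| ≤ 1 := abs_le.mpr ⟨by linarith, h2⟩

/-- Inverse-odds weighting identifiability of the positive predictive value:
under conditional exchangeability `Y ⟂ R | X` and positivity, with `Pr[g(X)=1, R=0] > 0`,
the PPV `Pr[Y=1 | g(X)=1, R=0]` equals
`E[(Pr[R=0|X]/Pr[R=1|X]) I(g(X)=1, Y=1, R=1)] / E[I(R=0) I(g(X)=1)]`. -/
theorem ppv_weighting_identification
    {Ω 𝓧 : Type*} [MeasurableSpace Ω] [MeasurableSpace 𝓧]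
    (μ : Measure Ω) [IsProbabilityMeasure μ]
    (X : Ω → 𝓧) (Y R : Ω → ℝ) (g m p : 𝓧 → ℝ)
    (hX : Measurable X) (hY : Measurable Y) (hR : Measurable R)
    (hg : Measurable g) (hm : Measurable m) (hp : Measurable p)
    (hYbin : ∀ ω, Y ω = 0 ∨ Y ω = 1) (hRbin : ∀ ω, R ω = 0 ∨ R ω = 1)
    (hgbin : ∀ x, g x = 0 ∨ g x = 1)
    -- `m` is a version of `Pr[Y=1 | X, R=1]`
    (hm_cond : ∀ f : 𝓧 → ℝ, Measurable f → (∀ x, |f x| ≤ 1) →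
      ∫ ω, f (X ω) * R ω * Y ω ∂μ = ∫ ω, f (X ω) * R ω * m (X ω) ∂μ)
    -- conditional exchangeability `Y ⟂ R | X`
    (hexch : ∀ f : 𝓧 → ℝ, Measurable f → (∀ x, |f x| ≤ 1) →
      ∫ ω, f (X ω) * (1 - R ω) * Y ω ∂μ = ∫ ω, f (X ω) * (1 - R ω) * m (X ω) ∂μ)
    -- `p` is a version of `Pr[R=1 | X]`
    (hp_cond : ∀ f : 𝓧 → ℝ, Measurable f → (∀ x, |f x| ≤ 1) →
      ∫ ω, f (X ω) * R ω ∂μ = ∫ ω, f (X ω) * p (X ω) ∂μ)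
    -- positivity: `Pr[R=1|X=x] > 0` wherever `Pr[R=0|X=x] > 0`
    (hpos : ∀ᵐ ω ∂μ, 0 < 1 - p (X ω) → 0 < p (X ω))
    -- `Pr[g(X)=1, R=0] > 0`
    (hden : 0 < ∫ ω, (1 - R ω) * g (X ω) ∂μ) :
    (∫ ω, (1 - R ω) * g (X ω) * Y ω ∂μ) / (∫ ω, (1 - R ω) * g (X ω) ∂μ)
      = (∫ ω, ((1 - p (X ω)) / p (X ω)) * g (X ω) * Y ω * R ω ∂μ)
        / (∫ ω, (1 - R ω) * g (X ω) ∂μ) := by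
  have hg01 : ∀ x, 0 ≤ g x ∧ g x ≤ 1 := fun x => by rcases hgbin x with h | h <;> simp [h]
  have hR01 : ∀ ω, 0 ≤ R ω ∧ R ω ≤ 1 := fun ω => by rcases hRbin ω with h | h <;> simp [h]
  have hY01 : ∀ ω, 0 ≤ Y ω ∧ Y ω ≤ 1 := fun ω => by rcases hYbin ω with h | h <;> simp [h]
  have h1Rbin : ∀ ω, (1 - R ω) = 0 ∨ (1 - R ω) = 1 := fun ω => by
    rcases hRbin ω with h | h <;> simp [h]
  set w : 𝓧 → ℝ := fun x => (1 - p x) / p x with hwdef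
  set m' : 𝓧 → ℝ := fun x => max 0 (min (m x) 1) with hm'def
  have hm'meas : Measurable m' := measurable_const.max (hm.min measurable_const)
  have hm'01 : ∀ x, 0 ≤ m' x ∧ m' x ≤ 1 :=
    fun x => ⟨le_max_left _ _, max_le zero_le_one (min_le_right _ _)⟩
  have hwmeas : Measurable w := (measurable_const.sub hp).div hp
  -- adapted conditional identities
  have Hm : ∀ f : 𝓧 → ℝ, Measurable f → (∀ x, |f x| ≤ 1) →
      ∫ ω, f (X ω) * (R ω * Y ω) ∂μ = ∫ ω, f (X ω) * (R ω * m (X ω)) ∂μ := by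
    intro f hf hb
    simpa only [mul_assoc] using hm_cond f hf hb
  have He : ∀ f : 𝓧 → ℝ, Measurable f → (∀ x, |f x| ≤ 1) →
      ∫ ω, f (X ω) * ((1 - R ω) * Y ω) ∂μ = ∫ ω, f (X ω) * ((1 - R ω) * m (X ω)) ∂μ := by
    intro f hf hb
    simpa only [mul_assoc] using hexch f hf hb
  have Hp1 : ∀ f : 𝓧 → ℝ, Measurable f → (∀ x, |f x| ≤ 1) →
      ∫ ω, f (X ω) * ((1 : ℝ) * R ω) ∂μ = ∫ ω, f (X ω) * ((1 : ℝ) * p (X ω)) ∂μ := by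
    intro f hf hb
    simpa only [one_mul] using hp_cond f hf hb
  -- a.e. bounds
  have bm1 := ppv_bound_aux μ X R Y m hX hR hY hm hRbin hYbin Hm
  have bm2 := ppv_bound_aux μ X (fun ω => 1 - R ω) Y m hX (measurable_const.sub hR) hY hm
    h1Rbin hYbin He
  have bp := ppv_bound_aux μ X (fun _ => (1 : ℝ)) R p hX measurable_const hR hp
    (fun _ => Or.inr rfl) hRbin Hp1
  have hp01 : ∀ᵐ ω ∂μ, 0 ≤ p (X ω) ∧ p (X ω) ≤ 1 := bp.mono fun ω h => h rfl
  have hppos : ∀ᵐ ω ∂μ, 0 < p (X ω) ∧ p (X ω) ≤ 1 := by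
    filter_upwards [hpos, hp01] with ω h1 h2
    rcases lt_or_ge (p (X ω)) 1 with h | h
    · exact ⟨h1 (by linarith), h2.2⟩
    · exact ⟨by linarith, h2.2⟩
  have hmm' : ∀ᵐ ω ∂μ, R ω * m (X ω) = R ω * m' (X ω) := by
    filter_upwards [bm1] with ω h
    rcases hRbin ω with h0 | h1
    · simp [h0]
    · obtain ⟨ha, hb⟩ := h h1
      have : m' (X ω) = m (X ω) := by
        rw [hm'def]; simp only
        rw [min_eq_left hb, max_eq_right ha]
      rw [this]
  have h1mm' : ∀ᵐ ω ∂μ, (1 - R ω) * m (X ω) = (1 - R ω) * m' (X ω) := by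
    filter_upwards [bm2] with ω h
    rcases h1Rbin ω with h0 | h1
    · simp [h0]
    · obtain ⟨ha, hb⟩ := h h1
      have : m' (X ω) = m (X ω) := by
        rw [hm'def]; simp only
        rw [min_eq_left hb, max_eq_right ha]
      rw [this]
  have Hm' : ∀ f : 𝓧 → ℝ, Measurable f → (∀ x, |f x| ≤ 1) →
      ∫ ω, f (X ω) * (R ω * Y ω) ∂μ = ∫ ω, f (X ω) * (R ω * m' (X ω)) ∂μ := by
    intro f hf hb
    refine (Hm f hf hb).trans (integral_congr_ae ?_)
    filter_upwards [hmm'] with ω h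
    rw [h]
  -- integrability of a.e.-bounded measurable functions
  have bddInt : ∀ (h : Ω → ℝ) (C : ℝ), Measurable h → (∀ᵐ ω ∂μ, |h ω| ≤ C) →
      Integrable h μ := fun h C hh hb =>
    (integrable_const C).mono' hh.aestronglyMeasurable (hb.mono fun ω hω => by
      rw [Real.norm_eq_abs]; exact hω)
  -- Step 1: LHS numerator equals ∫ (1-R) g m'
  have step1 : ∫ ω, (1 - R ω) * g (X ω) * Y ω ∂μ
      = ∫ ω, (1 - R ω) * g (X ω) * m' (X ω) ∂μ := by
    have h := He g hg (fun x => ppv_abs01 (hg01 x).1 (hg01 x).2)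
    have e1 : (fun ω => (1 - R ω) * g (X ω) * Y ω)
        = fun ω => g (X ω) * ((1 - R ω) * Y ω) := funext fun ω => by ring
    have e2 : (fun ω => (1 - R ω) * g (X ω) * m' (X ω))
        = fun ω => g (X ω) * ((1 - R ω) * m' (X ω)) := funext fun ω => by ring
    rw [e1, e2, h]
    refine integral_congr_ae ?_
    filter_upwards [h1mm'] with ω hω
    rw [hω]
  -- Step 2: ∫ (1-R) g m' = ∫ g m' (1-p)
  have hgm'bd : ∀ x, |g x * m' x| ≤ 1 := fun x =>
    ppv_absmul (ppv_abs01 (hg01 x).1 (hg01 x).2) (ppv_abs01 (hm'01 x).1 (hm'01 x).2)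
  have i1 : Integrable (fun ω => g (X ω) * m' (X ω)) μ :=
    bddInt _ 1 ((hg.comp hX).mul (hm'meas.comp hX)) (ae_of_all _ fun ω => hgm'bd (X ω))
  have i2 : Integrable (fun ω => g (X ω) * m' (X ω) * R ω) μ :=
    bddInt _ 1 (((hg.comp hX).mul (hm'meas.comp hX)).mul hR)
      (ae_of_all _ fun ω => ppv_absmul (hgm'bd (X ω)) (ppv_abs01 (hR01 ω).1 (hR01 ω).2))
  have i3 : Integrable (fun ω => g (X ω) * m' (X ω) * p (X ω)) μ := by
    refine bddInt _ 1 (((hg.comp hX).mul (hm'meas.comp hX)).mul (hp.comp hX)) ?_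
    filter_upwards [hp01] with ω h
    exact ppv_absmul (hgm'bd (X ω)) (ppv_abs01 h.1 h.2)
  have hgm' : ∫ ω, g (X ω) * m' (X ω) * R ω ∂μ = ∫ ω, g (X ω) * m' (X ω) * p (X ω) ∂μ := by
    exact hp_cond (fun x => g x * m' x) (hg.mul hm'meas) hgm'bd
  have step2 : ∫ ω, (1 - R ω) * g (X ω) * m' (X ω) ∂μ
      = ∫ ω, g (X ω) * m' (X ω) * (1 - p (X ω)) ∂μ := by
    have e1 : (fun ω => (1 - R ω) * g (X ω) * m' (X ω))
        = fun ω => g (X ω) * m' (X ω) - g (X ω) * m' (X ω) * R ω := funext fun ω => by ring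
    have e2 : (fun ω => g (X ω) * m' (X ω) * (1 - p (X ω)))
        = fun ω => g (X ω) * m' (X ω) - g (X ω) * m' (X ω) * p (X ω) := funext fun ω => by ring
    rw [e1, e2, integral_sub i1 i2, integral_sub i1 i3, hgm']
  -- truncated weights
  set W : ℕ → 𝓧 → ℝ := fun n x => min (max (w x) 0) (n : ℝ) with hWdef
  have hWmeas : ∀ n, Measurable (W n) := fun n =>
    (hwmeas.max measurable_const).min measurable_const
  have hW0 : ∀ (n : ℕ) x, 0 ≤ W n x := fun n x =>
    le_min (le_max_right _ _) (Nat.cast_nonneg n)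
  have hWn : ∀ (n : ℕ) x, W n x ≤ (n : ℝ) := fun n x => min_le_right _ _
  have hWmono : ∀ x, Monotone fun n : ℕ => W n x := fun x a b hab =>
    min_le_min le_rfl (Nat.cast_le.mpr hab)
  have hWgbd : ∀ (n : ℕ) x, |W n x * g x| ≤ (n : ℝ) := fun n x =>
    ppv_absmul (abs_le.mpr ⟨by linarith [hW0 n x, hWn n x], hWn n x⟩)
      (ppv_abs01 (hg01 x).1 (hg01 x).2)
  have hWgm'bd : ∀ (n : ℕ) x, |W n x * g x * m' x| ≤ (n : ℝ) := fun n x =>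
    ppv_absmul (hWgbd n x) (ppv_abs01 (hm'01 x).1 (hm'01 x).2)
  -- for each n, the weighted-truncated identity
  have an_eq_cn : ∀ n : ℕ,
      ∫ ω, W n (X ω) * g (X ω) * (R ω * Y ω) ∂μ
        = ∫ ω, W n (X ω) * g (X ω) * m' (X ω) * p (X ω) ∂μ := by
    intro n
    have s1 := ppv_scale_aux μ X (fun ω => R ω * Y ω) (fun ω => R ω * m' (X ω)) Hm'
      (fun x => W n x * g x) ((hWmeas n).mul hg) n (hWgbd n)
    have s2 := ppv_scale_aux μ X R (fun ω => p (X ω)) hp_cond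
      (fun x => W n x * g x * m' x) (((hWmeas n).mul hg).mul hm'meas) n (hWgm'bd n)
    have e : (fun ω => W n (X ω) * g (X ω) * (R ω * m' (X ω)))
        = fun ω => W n (X ω) * g (X ω) * m' (X ω) * R ω := funext fun ω => by ring
    calc ∫ ω, W n (X ω) * g (X ω) * (R ω * Y ω) ∂μ
        = ∫ ω, W n (X ω) * g (X ω) * (R ω * m' (X ω)) ∂μ := s1
      _ = ∫ ω, W n (X ω) * g (X ω) * m' (X ω) * R ω ∂μ := by rw [e]
      _ = ∫ ω, W n (X ω) * g (X ω) * m' (X ω) * p (X ω) ∂μ := s2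
  -- MCT for the c-sequence
  have cint : ∀ n : ℕ,
      Integrable (fun ω => W n (X ω) * g (X ω) * m' (X ω) * p (X ω)) μ := by
    intro n
    refine bddInt _ n (((((hWmeas n).comp hX).mul (hg.comp hX)).mul (hm'meas.comp hX)).mul (hp.comp hX)) ?_
    filter_upwards [hp01] with ω h
    exact ppv_absmul (hWgm'bd n (X ω)) (ppv_abs01 h.1 h.2)
  have c8int : Integrable (fun ω => g (X ω) * m' (X ω) * (1 - p (X ω))) μ := by
    refine bddInt _ 1 (((hg.comp hX).mul (hm'meas.comp hX)).mul
      (measurable_const.sub (hp.comp hX))) ?_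
    filter_upwards [hp01] with ω h
    exact ppv_absmul (hgm'bd (X ω)) (abs_le.mpr ⟨by linarith [h.2], by linarith [h.1]⟩)
  have hmono_c : ∀ᵐ ω ∂μ,
      Monotone fun n : ℕ => W n (X ω) * g (X ω) * m' (X ω) * p (X ω) := by
    filter_upwards [hppos] with ω h
    intro a b hab
    have hK : 0 ≤ g (X ω) * m' (X ω) * p (X ω) :=
      mul_nonneg (mul_nonneg (hg01 _).1 (hm'01 _).1) h.1.le
    calc W a (X ω) * g (X ω) * m' (X ω) * p (X ω)
        = W a (X ω) * (g (X ω) * m' (X ω) * p (X ω)) := by ring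
      _ ≤ W b (X ω) * (g (X ω) * m' (X ω) * p (X ω)) :=
          mul_le_mul_of_nonneg_right (hWmono (X ω) hab) hK
      _ = W b (X ω) * g (X ω) * m' (X ω) * p (X ω) := by ring
  have htend_c : ∀ᵐ ω ∂μ,
      Tendsto (fun n : ℕ => W n (X ω) * g (X ω) * m' (X ω) * p (X ω)) atTop
        (nhds (g (X ω) * m' (X ω) * (1 - p (X ω)))) := by
    filter_upwards [hppos] with ω h
    have hw0 : 0 ≤ w (X ω) := div_nonneg (by linarith [h.2]) h.1.le
    have hWe : ∀ n : ℕ, n ≥ ⌈w (X ω)⌉₊ → W n (X ω) = w (X ω) := by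
      intro n hn
      rw [hWdef]
      dsimp only
      rw [max_eq_left hw0, min_eq_left ((Nat.le_ceil _).trans (Nat.cast_le.mpr hn))]
    have hWt : Tendsto (fun n : ℕ => W n (X ω)) atTop (nhds (w (X ω))) :=
      tendsto_atTop_of_eventually_const hWe
    have ht := hWt.mul_const (g (X ω) * m' (X ω) * p (X ω))
    have heq : w (X ω) * (g (X ω) * m' (X ω) * p (X ω))
        = g (X ω) * m' (X ω) * (1 - p (X ω)) := by
      have hp0 : p (X ω) ≠ 0 := ne_of_gt h.1
      rw [hwdef]
      field_simp
    have efun : (fun n : ℕ => W n (X ω) * (g (X ω) * m' (X ω) * p (X ω)))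
        = fun n : ℕ => W n (X ω) * g (X ω) * m' (X ω) * p (X ω) :=
      funext fun n => by ring
    rw [efun, heq] at ht
    exact ht
  have cn_tendsto := integral_tendsto_of_tendsto_of_monotone cint c8int hmono_c htend_c
  -- the a-sequence and its pointwise limit
  set a : ℕ → Ω → ℝ := fun n ω => W n (X ω) * g (X ω) * (R ω * Y ω) with hadef
  set A : Ω → ℝ := fun ω => max (w (X ω)) 0 * g (X ω) * (R ω * Y ω) with hAdef
  have ha_nonneg : ∀ (n : ℕ) ω, 0 ≤ a n ω := fun n ω =>
    mul_nonneg (mul_nonneg (hW0 n _) (hg01 _).1) (mul_nonneg (hR01 ω).1 (hY01 ω).1)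
  have hA_nonneg : ∀ ω, 0 ≤ A ω := fun ω =>
    mul_nonneg (mul_nonneg (le_max_right _ _) (hg01 _).1)
      (mul_nonneg (hR01 ω).1 (hY01 ω).1)
  have ha_mono : ∀ ω, Monotone fun n : ℕ => a n ω := by
    intro ω i j hij
    have hK : 0 ≤ g (X ω) * (R ω * Y ω) :=
      mul_nonneg (hg01 _).1 (mul_nonneg (hR01 ω).1 (hY01 ω).1)
    calc a i ω = W i (X ω) * (g (X ω) * (R ω * Y ω)) := by rw [hadef]; ring
      _ ≤ W j (X ω) * (g (X ω) * (R ω * Y ω)) :=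
          mul_le_mul_of_nonneg_right (hWmono (X ω) hij) hK
      _ = a j ω := by rw [hadef]; ring
  have ha_tend : ∀ ω, Tendsto (fun n : ℕ => a n ω) atTop (nhds (A ω)) := by
    intro ω
    refine tendsto_atTop_of_eventually_const (i₀ := ⌈max (w (X ω)) 0⌉₊) ?_
    intro n hn
    rw [hadef, hAdef]
    dsimp only
    rw [hWdef]
    dsimp only
    rw [min_eq_left ((Nat.le_ceil _).trans (Nat.cast_le.mpr hn))]
  have ha_meas : ∀ n : ℕ, Measurable (a n) := fun n =>
    (((hWmeas n).comp hX).mul (hg.comp hX)).mul (hR.mul hY)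
  have hA_meas : Measurable A :=
    (((hwmeas.max measurable_const).comp hX).mul (hg.comp hX)).mul (hR.mul hY)
  have ha_int : ∀ n : ℕ, Integrable (a n) μ := fun n =>
    bddInt _ n (ha_meas n) (ae_of_all _ fun ω =>
      ppv_absmul (hWgbd n (X ω))
        (ppv_abs01 (mul_nonneg (hR01 ω).1 (hY01 ω).1)
          (mul_le_one₀ (hR01 ω).2 (hY01 ω).1 (hY01 ω).2)))
  have han_mono : Monotone fun n : ℕ => ∫ ω, a n ω ∂μ := fun i j hij =>
    integral_mono (ha_int i) (ha_int j) fun ω => ha_mono ω hij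
  -- the integrals of a n converge to ∫ c∞
  have han_lim : Tendsto (fun n : ℕ => ∫ ω, a n ω ∂μ) atTop
      (nhds (∫ ω, g (X ω) * m' (X ω) * (1 - p (X ω)) ∂μ)) := by
    have : (fun n : ℕ => ∫ ω, a n ω ∂μ)
        = fun n : ℕ => ∫ ω, W n (X ω) * g (X ω) * m' (X ω) * p (X ω) ∂μ :=
      funext fun n => an_eq_cn n
    rw [this]
    exact cn_tendsto
  -- lintegral computation
  have hL : ∫⁻ ω, ENNReal.ofReal (A ω) ∂μ
      = ENNReal.ofReal (∫ ω, g (X ω) * m' (X ω) * (1 - p (X ω)) ∂μ) := by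
    have h1 : ∀ ω, (⨆ n : ℕ, ENNReal.ofReal (a n ω)) = ENNReal.ofReal (A ω) := by
      intro ω
      refine tendsto_nhds_unique ?_ ((ENNReal.continuous_ofReal.tendsto _).comp (ha_tend ω))
      exact tendsto_atTop_iSup fun i j hij => ENNReal.ofReal_le_ofReal (ha_mono ω hij)
    have h2 : ∫⁻ ω, ENNReal.ofReal (A ω) ∂μ
        = ⨆ n : ℕ, ∫⁻ ω, ENNReal.ofReal (a n ω) ∂μ := by
      have hls := lintegral_iSup (μ := μ) (f := fun n ω => ENNReal.ofReal (a n ω))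
        (fun n => ENNReal.measurable_ofReal.comp (ha_meas n))
        (fun i j hij ω => ENNReal.ofReal_le_ofReal (ha_mono ω hij))
      rw [← hls]
      exact lintegral_congr fun ω => (h1 ω).symm
    have h3 : ∀ n : ℕ, ∫⁻ ω, ENNReal.ofReal (a n ω) ∂μ
        = ENNReal.ofReal (∫ ω, a n ω ∂μ) := fun n =>
      (ofReal_integral_eq_lintegral_ofReal (ha_int n)
        (ae_of_all _ fun ω => ha_nonneg n ω)).symm
    have h4 : (⨆ n : ℕ, ENNReal.ofReal (∫ ω, a n ω ∂μ))
        = ENNReal.ofReal (∫ ω, g (X ω) * m' (X ω) * (1 - p (X ω)) ∂μ) := by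
      refine tendsto_nhds_unique ?_ ((ENNReal.continuous_ofReal.tendsto _).comp han_lim)
      exact tendsto_atTop_iSup fun i j hij => ENNReal.ofReal_le_ofReal (han_mono hij)
    rw [h2]
    simp_rw [h3]
    exact h4
  have hAint : Integrable A μ :=
    ⟨hA_meas.aestronglyMeasurable,
      (hasFiniteIntegral_iff_ofReal (ae_of_all _ hA_nonneg)).mpr
        (hL ▸ ENNReal.ofReal_lt_top)⟩
  have hc8nonneg : 0 ≤ ∫ ω, g (X ω) * m' (X ω) * (1 - p (X ω)) ∂μ := by
    refine integral_nonneg_of_ae ?_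
    filter_upwards [hp01] with ω h
    exact mul_nonneg (mul_nonneg (hg01 _).1 (hm'01 _).1) (by linarith [h.2])
  have hAval : ∫ ω, A ω ∂μ = ∫ ω, g (X ω) * m' (X ω) * (1 - p (X ω)) ∂μ := by
    rw [integral_eq_lintegral_of_nonneg_ae (ae_of_all _ hA_nonneg)
      hA_meas.aestronglyMeasurable, hL, ENNReal.toReal_ofReal hc8nonneg]
  -- final identification of the right-hand numerator
  have hAfin : ∫ ω, A ω ∂μ = ∫ ω, (1 - p (X ω)) / p (X ω) * g (X ω) * Y ω * R ω ∂μ := by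
    refine integral_congr_ae ?_
    filter_upwards [hppos] with ω h
    have hw0 : 0 ≤ w (X ω) := div_nonneg (by linarith [h.2]) h.1.le
    rw [hAdef]
    dsimp only
    rw [max_eq_left hw0, hwdef]
    ring
  -- put everything together
  have key : ∫ ω, (1 - R ω) * g (X ω) * Y ω ∂μ
      = ∫ ω, (1 - p (X ω)) / p (X ω) * g (X ω) * Y ω * R ω ∂μ := by
    rw [step1, step2, ← hAval, hAfin]
  rw [key]
end

section
/- Let (X_i,Y_i,R_i), (X_j,Y_j,R_j) be i.i.d. copies of (X,Y,R) with Y ⟂ R | X and positivity. With w(x) = Pr[R=0|X=x]/Pr[R=1|X=x] and for any measurable k(X_i,X_j) ∈ {0,1}, the target AUC E[k(X_i,X_j) | Y_i=1, Y_j=0, R_i=0, R_j=0] equals E[ w(X_i) w(X_j) I(Y_i=1, Y_j=0, R_i=1, R_j=1) k(X_i,X_j) ] / E[ w(X_i) w(X_j) I(Y_i=1, Y_j=0, R_i=1, R_j=1) ], provided the denominator is positive. -/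
/-!
Reweighting the law of `X` by a `[0, 1]`-valued variable turns each hypothesis into an equality
of finite measures on the covariate space. For `Z = Y` and `Z = 1 - Y`, with `m_Z` its
conditional mean (`m`, resp. `1 - m`), the hypotheses give
`law_X((1 - R) Z) = m_Z (1 - p) law_X = m_Z p w law_X = law_X(w(X) R Z)`, where `w = (1 - p)/p`
and positivity makes `p w = 1 - p`. Numerator and denominator are iterated integrals over two
independent copies, so by Tonelli they only see the two copies through these reweighted laws;
working with `ℝ≥0∞`-valued integrals makes the unbounded weight `w` harmless, and finiteness is
recovered from the target-side integrals, which are at most `1`.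
-/

open MeasureTheory Filter ENNReal unitInterval

section

variable {Ω 𝓧 : Type*} [MeasurableSpace Ω] [MeasurableSpace 𝓧] {μ : Measure Ω} {X : Ω → 𝓧}

/-- `E[A | X] = E[B | X]`, tested against bounded measurable functions of `X`. -/
def CondExpEqGiven (μ : Measure Ω) (X : Ω → 𝓧) (A B : Ω → ℝ) : Prop :=
  ∀ f : 𝓧 → ℝ, Measurable f → (∀ x, |f x| ≤ 1) →
    ∫ ω, f (X ω) * A ω ∂μ = ∫ ω, f (X ω) * B ω ∂μ

lemma integrable_of_ae_mem_unitInterval [IsFiniteMeasure μ] {A : Ω → ℝ}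
    (hA : AEStronglyMeasurable A μ) (hAI : ∀ᵐ ω ∂μ, A ω ∈ I) : Integrable A μ :=
  .of_bound hA 1 <| by
    filter_upwards [hAI] with ω h
    rw [Real.norm_eq_abs, abs_le]
    exact ⟨by linarith [h.1], h.2⟩

lemma ae_le_of_condExpEqGiven_mul_of_le [IsFiniteMeasure μ] (hX : Measurable X)
    {A Z : Ω → ℝ} {g : 𝓧 → ℝ} {c : ℝ} (b : ℝ) (hA : Measurable A) (hZ : Measurable Z)
    (hg : Measurable g) (hAI : ∀ ω, A ω ∈ I) (hZ1 : ∀ ω, |Z ω| ≤ 1) (hZc : ∀ ω, Z ω ≤ c)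
    (h : CondExpEqGiven μ X (fun ω => A ω * Z ω) (fun ω => A ω * g (X ω))) :
    ∀ᵐ ω ∂μ, 0 < A ω → g (X ω) ≤ b → g (X ω) ≤ c := by
  set s := {x | c < g x ∧ g x ≤ b}
  have hs : MeasurableSet s :=
    (measurableSet_lt measurable_const hg).inter (measurableSet_le hg measurable_const)
  set f := s.indicator fun _ => (1 : ℝ)
  have hf : Measurable f := measurable_const.indicator hs
  have hf1 : ∀ x, |f x| ≤ 1 := fun x => by
    by_cases hx : x ∈ s <;> simp [f, hx]
  have hA1 : ∀ ω, |A ω| ≤ 1 := fun ω => abs_le.2 ⟨by linarith [(hAI ω).1], (hAI ω).2⟩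
  have hAZ : Integrable (fun ω => f (X ω) * (A ω * Z ω)) μ :=
    .of_bound (by fun_prop) 1 <| ae_of_all _ fun ω => by
      rw [Real.norm_eq_abs, abs_mul, abs_mul]
      exact mul_le_one₀ (hf1 _) (by positivity) (mul_le_one₀ (hA1 ω) (abs_nonneg _) (hZ1 ω))
  have hAg : Integrable (fun ω => f (X ω) * (A ω * g (X ω))) μ :=
    .of_bound (by fun_prop) (|c| + |b|) <| ae_of_all _ fun ω => by
      by_cases hx : X ω ∈ s
      · simp only [f, Set.indicator_of_mem hx, one_mul, Real.norm_eq_abs, abs_mul]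
        have hg' : |g (X ω)| ≤ |c| + |b| := abs_le.2
          ⟨by linarith [neg_abs_le c, abs_nonneg b, hx.1],
            by linarith [abs_nonneg c, le_abs_self b, hx.2]⟩
        nlinarith [abs_nonneg (g (X ω)), hA1 ω, abs_nonneg (A ω)]
      · simp [f, hx]
        positivity
  have hgap : ∀ᵐ ω ∂μ, f (X ω) * (A ω * g (X ω)) - f (X ω) * (A ω * Z ω) = 0 := by
    refine (integral_eq_zero_iff_of_nonneg (fun ω => ?_) (hAg.sub hAZ)).1 ?_
    · by_cases hx : X ω ∈ s
      · simp only [Pi.zero_apply, Pi.sub_apply, f, Set.indicator_of_mem hx, one_mul]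
        nlinarith [(hAI ω).1, hZc ω, hx.1]
      · simp [f, hx]
    · rw [integral_sub' hAg hAZ, h f hf hf1, sub_self]
  filter_upwards [hgap] with ω hω hA0 hgb
  by_contra! hc
  have hx : X ω ∈ s := ⟨hc, hgb⟩
  simp only [f, Set.indicator_of_mem hx, one_mul, ← mul_sub] at hω
  rcases mul_eq_zero.1 hω with h0 | h0
  · exact hA0.ne' h0
  · linarith [hZc ω]

lemma ae_le_of_condExpEqGiven_mul [IsFiniteMeasure μ] (hX : Measurable X)
    {A Z : Ω → ℝ} {g : 𝓧 → ℝ} {c : ℝ} (hA : Measurable A) (hZ : Measurable Z)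
    (hg : Measurable g) (hAI : ∀ ω, A ω ∈ I) (hZ1 : ∀ ω, |Z ω| ≤ 1) (hZc : ∀ ω, Z ω ≤ c)
    (h : CondExpEqGiven μ X (fun ω => A ω * Z ω) (fun ω => A ω * g (X ω))) :
    ∀ᵐ ω ∂μ, 0 < A ω → g (X ω) ≤ c := by
  -- Slicing by `g ≤ n` keeps every tested integral finite although `g` need not be bounded.
  filter_upwards [ae_all_iff.2 fun n : ℕ =>
    ae_le_of_condExpEqGiven_mul_of_le hX n hA hZ hg hAI hZ1 hZc h] with ω hω hA0
  obtain ⟨n, hn⟩ := exists_nat_ge (g (X ω))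
  exact hω n hA0 hn

lemma ae_mem_unitInterval_of_condExpEqGiven_mul [IsFiniteMeasure μ] (hX : Measurable X)
    {A Z : Ω → ℝ} {g : 𝓧 → ℝ} (hA : Measurable A) (hZ : Measurable Z)
    (hg : Measurable g) (hAI : ∀ ω, A ω ∈ I) (hZI : ∀ ω, Z ω ∈ I)
    (h : CondExpEqGiven μ X (fun ω => A ω * Z ω) (fun ω => A ω * g (X ω))) :
    ∀ᵐ ω ∂μ, 0 < A ω → g (X ω) ∈ I := by
  have hZ1 : ∀ ω, |Z ω| ≤ 1 := fun ω => abs_le.2 ⟨by linarith [(hZI ω).1], (hZI ω).2⟩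
  have upper := ae_le_of_condExpEqGiven_mul hX hA hZ hg hAI hZ1 (fun ω => (hZI ω).2) h
  have lower := ae_le_of_condExpEqGiven_mul (Z := fun ω => -Z ω) (g := fun x => -g x) (c := 0)
    hX hA hZ.neg hg.neg hAI (by simpa using hZ1) (fun ω => by linarith [(hZI ω).1])
    (fun f hf hf1 => by simpa only [mul_neg, integral_neg, neg_inj] using h f hf hf1)
  filter_upwards [upper, lower] with ω hu hl hA0
  exact ⟨by linarith [hl hA0], hu hA0⟩

lemma CondExpEqGiven.sub [IsFiniteMeasure μ] (hX : Measurable X) {A B C D : Ω → ℝ}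
    (hA : Integrable A μ) (hB : Integrable B μ) (hC : Integrable C μ) (hD : Integrable D μ)
    (hAB : CondExpEqGiven μ X A B) (hCD : CondExpEqGiven μ X C D) :
    CondExpEqGiven μ X (fun ω => C ω - A ω) (fun ω => D ω - B ω) := by
  intro f hf hf1
  have bdd : ∀ {E : Ω → ℝ}, Integrable E μ → Integrable (fun ω => f (X ω) * E ω) μ :=
    fun hE => hE.bdd_mul (hf.comp hX).aestronglyMeasurable (ae_of_all _ fun ω => hf1 (X ω))
  simp only [mul_sub]
  rw [integral_sub (bdd hC) (bdd hA), integral_sub (bdd hD) (bdd hB), hAB f hf hf1,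
    hCD f hf hf1]

lemma CondExpEqGiven.mul_one_sub [IsFiniteMeasure μ] (hX : Measurable X) {A Z : Ω → ℝ}
    {g : 𝓧 → ℝ} (hA : Measurable A) (hZ : Measurable Z) (hg : Measurable g)
    (hAI : ∀ ω, A ω ∈ I) (hZI : ∀ ω, Z ω ∈ I) (hgI : ∀ᵐ ω ∂μ, g (X ω) ∈ I)
    (h : CondExpEqGiven μ X (fun ω => A ω * Z ω) fun ω => A ω * g (X ω)) :
    CondExpEqGiven μ X (fun ω => A ω * (1 - Z ω)) fun ω => A ω * (1 - g (X ω)) := by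
  have hA' : Integrable A μ :=
    integrable_of_ae_mem_unitInterval hA.aestronglyMeasurable (ae_of_all _ hAI)
  simpa only [mul_sub, mul_one] using h.sub hX
    (integrable_of_ae_mem_unitInterval (by fun_prop)
      (ae_of_all _ fun ω => mul_mem (hAI ω) (hZI ω)))
    (integrable_of_ae_mem_unitInterval (by fun_prop) (hgI.mono fun ω h => mul_mem (hAI ω) h))
    hA' hA' fun _ _ _ => rfl

noncomputable def weightedLaw (μ : Measure Ω) (X : Ω → 𝓧) (A : Ω → ℝ) : Measure 𝓧 :=
  (μ.withDensity fun ω => .ofReal (A ω)).map X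

instance [SFinite μ] {A : Ω → ℝ} : SFinite (weightedLaw μ X A) := by
  unfold weightedLaw
  infer_instance

lemma lintegral_weightedLaw (hX : Measurable X) {A : Ω → ℝ} (hA : Measurable A)
    {φ : 𝓧 → ℝ≥0∞} (hφ : Measurable φ) :
    ∫⁻ x, φ x ∂weightedLaw μ X A = ∫⁻ ω, .ofReal (A ω) * φ (X ω) ∂μ := by
  rw [weightedLaw, lintegral_map hφ hX]
  exact lintegral_withDensity_eq_lintegral_mul _ hA.ennreal_ofReal (hφ.comp hX)

lemma weightedLaw_congr_ae {A B : Ω → ℝ} (h : A =ᵐ[μ] B) :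
    weightedLaw μ X A = weightedLaw μ X B := by
  rw [weightedLaw, weightedLaw, withDensity_congr_ae (h.mono fun _ h => by rw [h])]

lemma weightedLaw_comp_mul (hX : Measurable X) {A : Ω → ℝ} (hA : Measurable A)
    {g : 𝓧 → ℝ} (hg : Measurable g) (hg0 : ∀ᵐ ω ∂μ, 0 ≤ g (X ω)) :
    weightedLaw μ X (fun ω => g (X ω) * A ω)
      = (weightedLaw μ X A).withDensity fun x => .ofReal (g x) := by
  ext s hs
  rw [withDensity_apply _ hs, weightedLaw, weightedLaw, Measure.map_apply hX hs,
    withDensity_apply _ (hX hs), setLIntegral_map hs hg.ennreal_ofReal hX]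
  refine Eq.trans ?_ (setLIntegral_withDensity_eq_setLIntegral_mul _ hA.ennreal_ofReal
    (hg.ennreal_ofReal.comp hX) (hX hs)).symm
  refine setLIntegral_congr_fun_ae (hX hs) (hg0.mono fun ω h _ => ?_)
  simp only [Pi.mul_apply, Function.comp_apply, ofReal_mul h]
  ring

lemma weightedLaw_comp_mul_congr (hX : Measurable X) {A B : Ω → ℝ} (hA : Measurable A)
    (hB : Measurable B) {g : 𝓧 → ℝ} (hg : Measurable g) (hg0 : ∀ᵐ ω ∂μ, 0 ≤ g (X ω))
    (h : weightedLaw μ X A = weightedLaw μ X B) :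
    weightedLaw μ X (fun ω => g (X ω) * A ω) = weightedLaw μ X (fun ω => g (X ω) * B ω) := by
  rw [weightedLaw_comp_mul hX hA hg hg0, h, weightedLaw_comp_mul hX hB hg hg0]

lemma weightedLaw_eq_of_condExpEqGiven [IsFiniteMeasure μ] (hX : Measurable X) {A B : Ω → ℝ}
    (hA : Measurable A) (hB : Measurable B) (hAI : ∀ᵐ ω ∂μ, A ω ∈ I) (hBI : ∀ᵐ ω ∂μ, B ω ∈ I)
    (h : CondExpEqGiven μ X A B) : weightedLaw μ X A = weightedLaw μ X B := by
  have setIntegral_eq : ∀ {E : Ω → ℝ} {s : Set 𝓧}, MeasurableSet s →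
      ∫ ω in X ⁻¹' s, E ω ∂μ = ∫ ω, s.indicator (fun _ => (1 : ℝ)) (X ω) * E ω ∂μ := by
    intro E s hs
    rw [← integral_indicator (hX hs)]
    congr 1 with ω
    by_cases hx : X ω ∈ s <;> simp [hx]
  ext s hs
  rw [weightedLaw, weightedLaw, Measure.map_apply hX hs, Measure.map_apply hX hs,
    withDensity_apply _ (hX hs), withDensity_apply _ (hX hs),
    ← ofReal_integral_eq_lintegral_ofReal
      (integrable_of_ae_mem_unitInterval hA.aestronglyMeasurable hAI).integrableOn
      (ae_restrict_of_ae (hAI.mono fun _ h => h.1)),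
    ← ofReal_integral_eq_lintegral_ofReal
      (integrable_of_ae_mem_unitInterval hB.aestronglyMeasurable hBI).integrableOn
      (ae_restrict_of_ae (hBI.mono fun _ h => h.1)),
    setIntegral_eq hs, setIntegral_eq hs,
    h _ (measurable_const.indicator hs) fun x => by by_cases hx : x ∈ s <;> simp [hx]]

lemma weightedLaw_one_sub_mul_eq_odds_mul [IsFiniteMeasure μ] (hX : Measurable X)
    {R Z : Ω → ℝ} {p m : 𝓧 → ℝ} (hR : Measurable R) (hZ : Measurable Z) (hp : Measurable p)
    (hm : Measurable m) (hRI : ∀ ω, R ω ∈ I) (hZI : ∀ ω, Z ω ∈ I)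
    (hpI : ∀ᵐ ω ∂μ, p (X ω) ∈ I) (hmI : ∀ᵐ ω ∂μ, m (X ω) ∈ I) (hppos : ∀ᵐ ω ∂μ, 0 < p (X ω))
    (hRp : CondExpEqGiven μ X R fun ω => p (X ω))
    (hZ₁ : CondExpEqGiven μ X (fun ω => R ω * Z ω) fun ω => R ω * m (X ω))
    (hZ₀ : CondExpEqGiven μ X (fun ω => (1 - R ω) * Z ω) fun ω => (1 - R ω) * m (X ω)) :
    weightedLaw μ X (fun ω => (1 - R ω) * Z ω)
      = weightedLaw μ X (fun ω => (1 - p (X ω)) / p (X ω) * (R ω * Z ω)) := by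
  have h1RI : ∀ ω, 1 - R ω ∈ I := fun ω => Set.Icc.mem_iff_one_sub_mem.1 (hRI ω)
  have h1pI : ∀ᵐ ω ∂μ, 1 - p (X ω) ∈ I := hpI.mono fun _ h => Set.Icc.mem_iff_one_sub_mem.1 h
  have hodds0 : ∀ᵐ ω ∂μ, 0 ≤ (1 - p (X ω)) / p (X ω) :=
    hpI.mono fun _ h => div_nonneg (by linarith [h.2]) h.1
  have h1R : CondExpEqGiven μ X (fun ω => 1 - R ω) fun ω => 1 - p (X ω) :=
    hRp.sub hX (integrable_of_ae_mem_unitInterval hR.aestronglyMeasurable (ae_of_all _ hRI))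
      (integrable_of_ae_mem_unitInterval (hp.comp hX).aestronglyMeasurable hpI)
      (integrable_const 1) (integrable_const 1) fun _ _ _ => rfl
  calc weightedLaw μ X (fun ω => (1 - R ω) * Z ω)
      = weightedLaw μ X (fun ω => m (X ω) * (1 - R ω)) := by
        rw [weightedLaw_eq_of_condExpEqGiven hX (by fun_prop) (by fun_prop)
          (ae_of_all _ fun ω => mul_mem (h1RI ω) (hZI ω))
          (hmI.mono fun ω h => mul_mem (h1RI ω) h) hZ₀]
        congr 1 with ω
        ring
    _ = weightedLaw μ X (fun ω => m (X ω) * (1 - p (X ω))) :=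
        weightedLaw_comp_mul_congr (g := m) hX (by fun_prop) (by fun_prop) hm
          (hmI.mono fun _ h => h.1)
          (weightedLaw_eq_of_condExpEqGiven hX (by fun_prop) (by fun_prop) (ae_of_all _ h1RI)
            h1pI h1R)
    _ = weightedLaw μ X (fun ω => m (X ω) * ((1 - p (X ω)) / p (X ω)) * p (X ω)) :=
        weightedLaw_congr_ae (hppos.mono fun ω h => by field_simp)
    _ = weightedLaw μ X (fun ω => m (X ω) * ((1 - p (X ω)) / p (X ω)) * R ω) :=
        (weightedLaw_comp_mul_congr (g := fun x => m x * ((1 - p x) / p x)) hX hR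
          (by fun_prop) (by fun_prop) ((hmI.and hodds0).mono fun _ h => mul_nonneg h.1.1 h.2)
          (weightedLaw_eq_of_condExpEqGiven hX hR (by fun_prop) (ae_of_all _ hRI) hpI hRp)).symm
    _ = weightedLaw μ X (fun ω => (1 - p (X ω)) / p (X ω) * (R ω * m (X ω))) := by
        congr 1 with ω
        ring
    _ = weightedLaw μ X (fun ω => (1 - p (X ω)) / p (X ω) * (R ω * Z ω)) :=
        (weightedLaw_comp_mul_congr (g := fun x => (1 - p x) / p x) hX (by fun_prop)
          (by fun_prop) (by fun_prop) hodds0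
          (weightedLaw_eq_of_condExpEqGiven hX (by fun_prop) (by fun_prop)
            (ae_of_all _ fun ω => mul_mem (hRI ω) (hZI ω))
            (hmI.mono fun ω h => mul_mem (hRI ω) h) hZ₁)).symm

lemma lintegral_lintegral_eq_of_weightedLaw_eq [SFinite μ] (hX : Measurable X)
    {A₁ A₂ B₁ B₂ : Ω → ℝ} (hA₁ : Measurable A₁) (hA₂ : Measurable A₂) (hB₁ : Measurable B₁)
    (hB₂ : Measurable B₂) (h₁ : weightedLaw μ X A₁ = weightedLaw μ X B₁)
    (h₂ : weightedLaw μ X A₂ = weightedLaw μ X B₂) {κ : 𝓧 → 𝓧 → ℝ≥0∞}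
    (hκ : Measurable (Function.uncurry κ)) :
    ∫⁻ ω, ∫⁻ ω', .ofReal (A₁ ω) * .ofReal (A₂ ω') * κ (X ω) (X ω') ∂μ ∂μ
      = ∫⁻ ω, ∫⁻ ω', .ofReal (B₁ ω) * .ofReal (B₂ ω') * κ (X ω) (X ω') ∂μ ∂μ := by
  have iterate : ∀ {C₁ C₂ : Ω → ℝ}, Measurable C₁ → Measurable C₂ →
      ∫⁻ ω, ∫⁻ ω', .ofReal (C₁ ω) * .ofReal (C₂ ω') * κ (X ω) (X ω') ∂μ ∂μ
        = ∫⁻ x, ∫⁻ y, κ x y ∂weightedLaw μ X C₂ ∂weightedLaw μ X C₁ := by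
    intro C₁ C₂ hC₁ hC₂
    have hG : Measurable fun x => ∫⁻ y, κ x y ∂weightedLaw μ X C₂ := hκ.lintegral_prod_right'
    rw [lintegral_weightedLaw hX hC₁ hG]
    congr 1 with ω
    rw [lintegral_weightedLaw hX hC₂ hκ.of_uncurry_left, ← lintegral_const_mul]
    · simp only [mul_assoc]
    · exact hC₂.ennreal_ofReal.mul (hκ.of_uncurry_left.comp hX)
  rw [iterate hA₁ hA₂, iterate hB₁ hB₂, h₁, h₂]

lemma integral_integral_eq_toReal_lintegral_lintegral [SFinite μ] {F : Ω → Ω → ℝ}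
    (hF : Measurable (Function.uncurry F)) (hF0 : ∀ᵐ ω ∂μ, ∀ᵐ ω' ∂μ, 0 ≤ F ω ω')
    (hfin : ∫⁻ ω, ∫⁻ ω', .ofReal (F ω ω') ∂μ ∂μ ≠ ∞) :
    ∫ ω, ∫ ω', F ω ω' ∂μ ∂μ = (∫⁻ ω, ∫⁻ ω', .ofReal (F ω ω') ∂μ ∂μ).toReal := by
  have hinner := ae_lt_top' hF.ennreal_ofReal.lintegral_prod_right'.aemeasurable hfin
  rw [integral_eq_lintegral_of_nonneg_ae (hF0.mono fun _ h => integral_nonneg_of_ae h)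
    hF.stronglyMeasurable.integral_prod_right'.aestronglyMeasurable]
  congr 1
  refine lintegral_congr_ae ?_
  filter_upwards [hF0, hinner] with ω h0 hlt
  rw [integral_eq_lintegral_of_nonneg_ae h0
    (hF.comp measurable_prodMk_left).aestronglyMeasurable]
  exact ofReal_toReal hlt.ne

lemma integral_integral_eq_of_weightedLaw_eq [IsProbabilityMeasure μ] (hX : Measurable X)
    {A₁ A₂ B₁ B₂ : Ω → ℝ} (hA₁ : Measurable A₁) (hA₂ : Measurable A₂) (hB₁ : Measurable B₁)
    (hB₂ : Measurable B₂) (hA₁I : ∀ ω, A₁ ω ∈ I) (hA₂I : ∀ ω, A₂ ω ∈ I)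
    (hB₁0 : ∀ᵐ ω ∂μ, 0 ≤ B₁ ω) (hB₂0 : ∀ᵐ ω ∂μ, 0 ≤ B₂ ω)
    (h₁ : weightedLaw μ X A₁ = weightedLaw μ X B₁) (h₂ : weightedLaw μ X A₂ = weightedLaw μ X B₂)
    {κ : 𝓧 → 𝓧 → ℝ} (hκ : Measurable (Function.uncurry κ)) (hκI : ∀ x y, κ x y ∈ I) :
    ∫ ω, ∫ ω', A₁ ω * A₂ ω' * κ (X ω) (X ω') ∂μ ∂μ
      = ∫ ω, ∫ ω', B₁ ω * B₂ ω' * κ (X ω) (X ω') ∂μ ∂μ := by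
  have hκX : Measurable fun z : Ω × Ω => κ (X z.1) (X z.2) := hκ.comp (hX.prodMap hX)
  have ofReal_prod : ∀ {C₁ C₂ : Ω → ℝ} {ω ω'}, 0 ≤ C₁ ω → 0 ≤ C₂ ω' →
      ENNReal.ofReal (C₁ ω * C₂ ω' * κ (X ω) (X ω'))
        = .ofReal (C₁ ω) * .ofReal (C₂ ω') * .ofReal (κ (X ω) (X ω')) := fun h₁ h₂ => by
    rw [ofReal_mul (mul_nonneg h₁ h₂), ofReal_mul h₁]
  have hlint : ∫⁻ ω, ∫⁻ ω', .ofReal (A₁ ω * A₂ ω' * κ (X ω) (X ω')) ∂μ ∂μ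
      = ∫⁻ ω, ∫⁻ ω', .ofReal (B₁ ω * B₂ ω' * κ (X ω) (X ω')) ∂μ ∂μ := by
    calc _ = ∫⁻ ω, ∫⁻ ω', .ofReal (A₁ ω) * .ofReal (A₂ ω') * .ofReal (κ (X ω) (X ω')) ∂μ ∂μ := by
          simp only [ofReal_prod (hA₁I _).1 (hA₂I _).1]
      _ = ∫⁻ ω, ∫⁻ ω', .ofReal (B₁ ω) * .ofReal (B₂ ω') * .ofReal (κ (X ω) (X ω')) ∂μ ∂μ :=
          lintegral_lintegral_eq_of_weightedLaw_eq (κ := fun x y => .ofReal (κ x y))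
            hX hA₁ hA₂ hB₁ hB₂ h₁ h₂ hκ.ennreal_ofReal
      _ = _ := lintegral_congr_ae <| hB₁0.mono fun _ h₁ =>
          lintegral_congr_ae <| hB₂0.mono fun _ h₂ => (ofReal_prod h₁ h₂).symm
  have hfin : ∫⁻ ω, ∫⁻ ω', .ofReal (A₁ ω * A₂ ω' * κ (X ω) (X ω')) ∂μ ∂μ ≠ ∞ := by
    refine (lt_of_le_of_lt (b := ∫⁻ _, ∫⁻ _, 1 ∂μ ∂μ) ?_ (by simp)).ne
    exact lintegral_mono fun ω => lintegral_mono fun ω' =>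
      ofReal_le_one.2 (mul_mem (mul_mem (hA₁I ω) (hA₂I ω')) (hκI _ _)).2
  rw [integral_integral_eq_toReal_lintegral_lintegral
      (((hA₁.comp measurable_fst).mul (hA₂.comp measurable_snd)).mul hκX)
      (ae_of_all _ fun ω => ae_of_all _ fun ω' =>
        (mul_mem (mul_mem (hA₁I ω) (hA₂I ω')) (hκI _ _)).1) hfin,
    integral_integral_eq_toReal_lintegral_lintegral
      (((hB₁.comp measurable_fst).mul (hB₂.comp measurable_snd)).mul hκX)
      (hB₁0.mono fun ω h₁ => hB₂0.mono fun ω' h₂ =>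
        mul_nonneg (mul_nonneg h₁ h₂) (hκI _ _).1) (hlint ▸ hfin), hlint]

lemma integral_integral_one_sub_mul_eq_odds_mul [IsProbabilityMeasure μ] (hX : Measurable X)
    {R Y : Ω → ℝ} {p m : 𝓧 → ℝ} (hR : Measurable R) (hY : Measurable Y) (hp : Measurable p)
    (hm : Measurable m) (hRI : ∀ ω, R ω ∈ I) (hYI : ∀ ω, Y ω ∈ I)
    (hpI : ∀ᵐ ω ∂μ, p (X ω) ∈ I) (hmI : ∀ᵐ ω ∂μ, m (X ω) ∈ I) (hppos : ∀ᵐ ω ∂μ, 0 < p (X ω))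
    (hRp : CondExpEqGiven μ X R fun ω => p (X ω))
    (hY₁ : CondExpEqGiven μ X (fun ω => R ω * Y ω) fun ω => R ω * m (X ω))
    (hY₀ : CondExpEqGiven μ X (fun ω => (1 - R ω) * Y ω) fun ω => (1 - R ω) * m (X ω))
    {κ : 𝓧 → 𝓧 → ℝ} (hκ : Measurable (Function.uncurry κ)) (hκI : ∀ x y, κ x y ∈ I) :
    ∫ ω, ∫ ω', (1 - R ω) * (1 - R ω') * Y ω * (1 - Y ω') * κ (X ω) (X ω') ∂μ ∂μ
      = ∫ ω, ∫ ω', (1 - p (X ω)) / p (X ω) * ((1 - p (X ω')) / p (X ω'))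
          * Y ω * (1 - Y ω') * R ω * R ω' * κ (X ω) (X ω') ∂μ ∂μ := by
  have h1RI : ∀ ω, 1 - R ω ∈ I := fun ω => Set.Icc.mem_iff_one_sub_mem.1 (hRI ω)
  have h1YI : ∀ ω, 1 - Y ω ∈ I := fun ω => Set.Icc.mem_iff_one_sub_mem.1 (hYI ω)
  have hodds0 : ∀ᵐ ω ∂μ, 0 ≤ (1 - p (X ω)) / p (X ω) :=
    hpI.mono fun _ h => div_nonneg (by linarith [h.2]) h.1
  have hlawY := weightedLaw_one_sub_mul_eq_odds_mul hX hR hY hp hm hRI hYI hpI hmI hppos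
    hRp hY₁ hY₀
  have hlaw1Y := weightedLaw_one_sub_mul_eq_odds_mul (Z := fun ω => 1 - Y ω)
    (m := fun x => 1 - m x) hX hR (by fun_prop) hp (by fun_prop) hRI h1YI hpI
    (hmI.mono fun _ h => Set.Icc.mem_iff_one_sub_mem.1 h) hppos hRp
    (hY₁.mul_one_sub hX hR hY hm hRI hYI hmI) (hY₀.mul_one_sub hX (by fun_prop) hY hm h1RI hYI hmI)
  convert integral_integral_eq_of_weightedLaw_eq hX (by fun_prop) (by fun_prop) (by fun_prop)
    (by fun_prop) (fun ω => mul_mem (h1RI ω) (hYI ω)) (fun ω => mul_mem (h1RI ω) (h1YI ω))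
    (hodds0.mono fun ω h => mul_nonneg h (mul_mem (hRI ω) (hYI ω)).1)
    (hodds0.mono fun ω h => mul_nonneg h (mul_mem (hRI ω) (h1YI ω)).1) hlawY hlaw1Y hκ hκI
    using 5 <;> ring

end

theorem auc_weighting_identification_general
    {Ω 𝓧 : Type*} [MeasurableSpace Ω] [MeasurableSpace 𝓧]
    (μ : Measure Ω) [IsProbabilityMeasure μ]
    (X : Ω → 𝓧) (Y R : Ω → ℝ) (m p : 𝓧 → ℝ) (k : 𝓧 → 𝓧 → ℝ)
    (hX : Measurable X) (hY : Measurable Y) (hR : Measurable R)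
    (hm : Measurable m) (hp : Measurable p) (hk : Measurable (Function.uncurry k))
    (hYbin : ∀ ω, Y ω = 0 ∨ Y ω = 1) (hRbin : ∀ ω, R ω = 0 ∨ R ω = 1)
    (hkbin : ∀ x x', k x x' = 0 ∨ k x x' = 1)
    -- `m` is a version of `Pr[Y=1 | X, R=1]`
    (hm_cond : ∀ f : 𝓧 → ℝ, Measurable f → (∀ x, |f x| ≤ 1) →
      ∫ ω, f (X ω) * R ω * Y ω ∂μ = ∫ ω, f (X ω) * R ω * m (X ω) ∂μ)
    -- conditional exchangeability `Y ⟂ R | X`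
    (hexch : ∀ f : 𝓧 → ℝ, Measurable f → (∀ x, |f x| ≤ 1) →
      ∫ ω, f (X ω) * (1 - R ω) * Y ω ∂μ = ∫ ω, f (X ω) * (1 - R ω) * m (X ω) ∂μ)
    -- `p` is a version of `Pr[R=1 | X]`
    (hp_cond : ∀ f : 𝓧 → ℝ, Measurable f → (∀ x, |f x| ≤ 1) →
      ∫ ω, f (X ω) * R ω ∂μ = ∫ ω, f (X ω) * p (X ω) ∂μ)
    -- positivity
    (hpos : ∀ᵐ ω ∂μ, 0 < 1 - p (X ω) → 0 < p (X ω)) :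
    (∫ ω, ∫ ω', (1 - R ω) * (1 - R ω') * Y ω * (1 - Y ω') * k (X ω) (X ω') ∂μ ∂μ)
        / (∫ ω, ∫ ω', (1 - R ω) * (1 - R ω') * Y ω * (1 - Y ω') ∂μ ∂μ)
      = (∫ ω, ∫ ω', ((1 - p (X ω)) / p (X ω)) * ((1 - p (X ω')) / p (X ω'))
            * Y ω * (1 - Y ω') * R ω * R ω' * k (X ω) (X ω') ∂μ ∂μ)
        / (∫ ω, ∫ ω', ((1 - p (X ω)) / p (X ω)) * ((1 - p (X ω')) / p (X ω'))
            * Y ω * (1 - Y ω') * R ω * R ω' ∂μ ∂μ) := by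
  have hYI : ∀ ω, Y ω ∈ I := fun ω => by rcases hYbin ω with h | h <;> simp [h]
  have hRI : ∀ ω, R ω ∈ I := fun ω => by rcases hRbin ω with h | h <;> simp [h]
  have hkI : ∀ x x', k x x' ∈ I := fun x x' => by rcases hkbin x x' with h | h <;> simp [h]
  have hY₁ : CondExpEqGiven μ X (fun ω => R ω * Y ω) fun ω => R ω * m (X ω) :=
    fun f hf hf1 => by simpa only [mul_assoc] using hm_cond f hf hf1
  have hY₀ : CondExpEqGiven μ X (fun ω => (1 - R ω) * Y ω) fun ω => (1 - R ω) * m (X ω) :=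
    fun f hf hf1 => by simpa only [mul_assoc] using hexch f hf hf1
  have hpI : ∀ᵐ ω ∂μ, p (X ω) ∈ I := by
    simpa using ae_mem_unitInterval_of_condExpEqGiven_mul (A := fun _ => 1) hX measurable_const
      hR hp (fun _ => one_mem) hRI fun f hf hf1 => by simpa only [one_mul] using hp_cond f hf hf1
  have hmI : ∀ᵐ ω ∂μ, m (X ω) ∈ I := by
    filter_upwards [ae_mem_unitInterval_of_condExpEqGiven_mul hX hR hY hm hRI hYI hY₁,
      ae_mem_unitInterval_of_condExpEqGiven_mul hX (by fun_prop) hY hm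
        (fun ω => Set.Icc.mem_iff_one_sub_mem.1 (hRI ω)) hYI hY₀] with ω h₁ h₀
    rcases hRbin ω with h | h
    · exact h₀ (by simp [h])
    · exact h₁ (by simp [h])
  have hppos : ∀ᵐ ω ∂μ, 0 < p (X ω) :=
    hpos.mono fun ω h => by by_contra! h'; linarith [h (by linarith)]
  have auc := fun {κ} => integral_integral_one_sub_mul_eq_odds_mul (κ := κ) hX hR hY hp hm
    hRI hYI hpI hmI hppos hp_cond hY₁ hY₀
  congr 1
  · exact auc hk hkI
  · simpa only [mul_one] using auc (κ := fun _ _ => 1) measurable_const fun _ _ => one_mem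

/-- Inverse-odds weighting identifiability of the AUC in the target
population.  Two i.i.d. copies of `(X, Y, R)` are modeled via iterated integrals with
respect to the same probability measure `μ`.  With `w(x) = Pr[R=0|X=x]/Pr[R=1|X=x]`
(where `p` is a version of `Pr[R=1|X]`), under conditional exchangeability `Y ⟂ R | X` and
positivity, provided the denominator is positive,
`E[k(X_i,X_j) | Y_i=1, Y_j=0, R_i=0, R_j=0]` equals
`E[w(X_i) w(X_j) I(Y_i=1, Y_j=0, R_i=1, R_j=1) k(X_i,X_j)]`
divided by `E[w(X_i) w(X_j) I(Y_i=1, Y_j=0, R_i=1, R_j=1)]`. -/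
theorem auc_weighting_identification
    {Ω 𝓧 : Type*} [MeasurableSpace Ω] [MeasurableSpace 𝓧]
    (μ : Measure Ω) [IsProbabilityMeasure μ]
    (X : Ω → 𝓧) (Y R : Ω → ℝ) (m p : 𝓧 → ℝ) (k : 𝓧 → 𝓧 → ℝ)
    (hX : Measurable X) (hY : Measurable Y) (hR : Measurable R)
    (hm : Measurable m) (hp : Measurable p) (hk : Measurable (Function.uncurry k))
    (hYbin : ∀ ω, Y ω = 0 ∨ Y ω = 1) (hRbin : ∀ ω, R ω = 0 ∨ R ω = 1)
    (hkbin : ∀ x x', k x x' = 0 ∨ k x x' = 1)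
    -- `m` is a version of `Pr[Y=1 | X, R=1]`
    (hm_cond : ∀ f : 𝓧 → ℝ, Measurable f → (∀ x, |f x| ≤ 1) →
      ∫ ω, f (X ω) * R ω * Y ω ∂μ = ∫ ω, f (X ω) * R ω * m (X ω) ∂μ)
    -- conditional exchangeability `Y ⟂ R | X`
    (hexch : ∀ f : 𝓧 → ℝ, Measurable f → (∀ x, |f x| ≤ 1) →
      ∫ ω, f (X ω) * (1 - R ω) * Y ω ∂μ = ∫ ω, f (X ω) * (1 - R ω) * m (X ω) ∂μ)
    -- `p` is a version of `Pr[R=1 | X]`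
    (hp_cond : ∀ f : 𝓧 → ℝ, Measurable f → (∀ x, |f x| ≤ 1) →
      ∫ ω, f (X ω) * R ω ∂μ = ∫ ω, f (X ω) * p (X ω) ∂μ)
    -- positivity
    (hpos : ∀ᵐ ω ∂μ, 0 < 1 - p (X ω) → 0 < p (X ω))
    -- the denominator of the weighting representation is positive
    (hden : 0 < ∫ ω, ∫ ω', ((1 - p (X ω)) / p (X ω)) * ((1 - p (X ω')) / p (X ω'))
        * Y ω * (1 - Y ω') * R ω * R ω' ∂μ ∂μ) :
    (∫ ω, ∫ ω', (1 - R ω) * (1 - R ω') * Y ω * (1 - Y ω') * k (X ω) (X ω') ∂μ ∂μ)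
        / (∫ ω, ∫ ω', (1 - R ω) * (1 - R ω') * Y ω * (1 - Y ω') ∂μ ∂μ)
      = (∫ ω, ∫ ω', ((1 - p (X ω)) / p (X ω)) * ((1 - p (X ω')) / p (X ω'))
            * Y ω * (1 - Y ω') * R ω * R ω' * k (X ω) (X ω') ∂μ ∂μ)
        / (∫ ω, ∫ ω', ((1 - p (X ω)) / p (X ω)) * ((1 - p (X ω')) / p (X ω'))
            * Y ω * (1 - Y ω') * R ω * R ω' ∂μ ∂μ) :=
  auc_weighting_identification_general μ X Y R m p k hX hY hR hm hp hk hYbin hRbin hkbin hm_cond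
    hexch hp_cond hpos
end

section
/- Let (X,Y,R) satisfy Y ⟂ R | X and positivity, with m(x) = Pr[Y=1|X=x,R=1], w(x) = Pr[R=0|X=x]/Pr[R=1|X=x], and α₀ = E[m(X) | R=0] > 0. Suppose either m* = m (and w* arbitrary bounded) or w* = w (and m* arbitrary bounded). Then for any measurable g(X) ∈ {0,1}, the ratio E[ I(R=0) g(X) m*(X) + w*(X) I(R=1) g(X)(I(Y=1) − m*(X)) ] / E[ I(R=0) m*(X) + w*(X) I(R=1)(I(Y=1) − m*(X)) ] equals Pr[g(X)=1 | Y=1, R=0]. -/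
/-!
Both working models give the same answer because, for every bounded `q(X)`, the augmented moment
`E[(1-R) q m⋆ + w⋆ R q (Y - m⋆)]` equals `E[(1-R) q Y]`; taking `q = g` and `q = 1` identifies
numerator and denominator with those of `Pr[g(X)=1 | Y=1, R=0]`. If `m⋆ = m`, the correction
`w⋆ R q (Y - m)` has mean zero because `m(X)` is the regression of `Y` on `X` in the `R = 1`
stratum. If `w⋆ = (1-p)/p`, inverse-odds weighting moves the `R = 1` stratum onto the `R = 0` one,
`E[w⋆ R h(X)] = E[(1-p) h(X)] = E[(1-R) h(X)]`, so the correction cancels the plug-in term and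
leaves `E[(1-R) q m] = E[(1-R) q Y]` by exchangeability.

The only analytic subtlety is that `m` and `p` are not assumed bounded. Being versions of
conditional probabilities, they take values in `[0,1]` along `X` almost surely; this follows by
testing their defining identities against indicators of sets `{a ≤ v < c}`, on which they are
bounded.
-/

open MeasureTheory

/-- `E[A | X] = E[B | X]`, tested against bounded measurable functions of `X`. -/
def CondMeanEq {Ω 𝓧 : Type*} [MeasurableSpace Ω] [MeasurableSpace 𝓧]
    (μ : Measure Ω) (X : Ω → 𝓧) (A B : Ω → ℝ) : Prop :=
  ∀ f : 𝓧 → ℝ, Measurable f → (∀ x, |f x| ≤ 1) →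
    ∫ ω, f (X ω) * A ω ∂μ = ∫ ω, f (X ω) * B ω ∂μ

section

variable {Ω 𝓧 : Type*} [MeasurableSpace Ω] [MeasurableSpace 𝓧] {μ : Measure Ω} {X : Ω → 𝓧}

theorem integrable_of_mem_Icc [IsFiniteMeasure μ] {F : Ω → ℝ} (hF : Measurable F)
    (hF01 : ∀ ω, F ω ∈ Set.Icc 0 1) : Integrable F μ :=
  .of_bound hF.aestronglyMeasurable 1
    (ae_of_all _ fun ω => (Real.norm_of_nonneg (hF01 ω).1).trans_le (hF01 ω).2)

theorem integrable_indicator_comp_mul {e : Ω → ℝ} (he : Integrable e μ) (hX : Measurable X)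
    {S : Set 𝓧} (hS : MeasurableSet S) {g : 𝓧 → ℝ} (hg : Measurable g) {K : ℝ}
    (hgS : ∀ x ∈ S, |g x| ≤ K) : Integrable (fun ω => S.indicator g (X ω) * e ω) μ := by
  refine he.bdd_mul (c := max K 0) ((hg.indicator hS).comp hX).aestronglyMeasurable
    (ae_of_all _ fun ω => ?_)
  by_cases hω : X ω ∈ S
  · simpa only [Set.indicator_of_mem hω, Real.norm_eq_abs] using le_max_of_le_left (hgS _ hω)
  · simp only [Set.indicator_of_notMem hω, norm_zero, le_max_right]

namespace CondMeanEq

variable {A B : Ω → ℝ}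

theorem integral_eq (h : CondMeanEq μ X A B) {f : 𝓧 → ℝ} (hf : Measurable f) {K : ℝ}
    (hfK : ∀ᵐ ω ∂μ, ‖f (X ω)‖ ≤ K) :
    ∫ ω, f (X ω) * A ω ∂μ = ∫ ω, f (X ω) * B ω ∂μ := by
  set c := max K 1
  have hc : 0 < c := lt_max_of_lt_right one_pos
  -- clipping `f` to `[-c, c]` changes it only off a null set of values of `X`
  set f₁ : 𝓧 → ℝ := fun x => max (-c) (min (f x) c) / c
  have hf₁ : ∀ x, |f₁ x| ≤ 1 := fun x => by
    rw [abs_div, abs_of_pos hc, div_le_one hc, abs_le]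
    exact ⟨le_max_left _ _, max_le (by linarith) (min_le_right _ _)⟩
  have hff₁ : ∀ᵐ ω ∂μ, f (X ω) = c * f₁ (X ω) := by
    filter_upwards [hfK] with ω hω
    obtain ⟨h₁, h₂⟩ := abs_le.1 (hω.trans (le_max_left K 1) : |f (X ω)| ≤ c)
    simp only [f₁, min_eq_left h₂, max_eq_right h₁, mul_div_cancel₀ _ hc.ne']
  have hscale (D : Ω → ℝ) : ∫ ω, f (X ω) * D ω ∂μ = c * ∫ ω, f₁ (X ω) * D ω ∂μ := by
    rw [← integral_const_mul]
    exact integral_congr_ae (by filter_upwards [hff₁] with ω hω; rw [hω, mul_assoc])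
  rw [hscale, hscale, h f₁ (by fun_prop) hf₁]

theorem sub {A' B' : Ω → ℝ} (h : CondMeanEq μ X A B) (h' : CondMeanEq μ X A' B')
    (hX : Measurable X) (hA : Integrable A μ) (hB : Integrable B μ) (hA' : Integrable A' μ)
    (hB' : Integrable B' μ) : CondMeanEq μ X (A - A') (B - B') := by
  intro f hf hf1
  have hint {D : Ω → ℝ} (hD : Integrable D μ) : Integrable (fun ω => f (X ω) * D ω) μ :=
    hD.bdd_mul (hf.comp hX).aestronglyMeasurable (ae_of_all _ fun ω => hf1 (X ω))
  simp only [Pi.sub_apply, mul_sub]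
  rw [integral_sub (hint hA) (hint hA'), integral_sub (hint hB) (hint hB'), h f hf hf1,
    h' f hf hf1]

variable {u b : Ω → ℝ} {v : 𝓧 → ℝ}

theorem ae_le_of_mul_le_of_le {a c : ℝ} (h : CondMeanEq μ X u (fun ω => b ω * v (X ω)))
    (hX : Measurable X) (hv : Measurable v) (hu : Integrable u μ) (hb : Integrable b μ)
    (hb0 : ∀ ω, 0 ≤ b ω) (hcu : ∀ ω, c * b ω ≤ u ω) :
    ∀ᵐ ω ∂μ, 0 < b ω → a ≤ v (X ω) → c ≤ v (X ω) := by
  set S := {x | a ≤ v x ∧ v x < c}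
  have hS : MeasurableSet S :=
    (measurableSet_le measurable_const hv).inter (measurableSet_lt hv measurable_const)
  have hint {g : 𝓧 → ℝ} {e : Ω → ℝ} (hg : Measurable g) {K : ℝ} (hgS : ∀ x ∈ S, |g x| ≤ K)
      (he : Integrable e μ) : Integrable (fun ω => S.indicator g (X ω) * e ω) μ :=
    integrable_indicator_comp_mul he hX hS hg hgS
  have h1S : ∀ x ∈ S, |(1 : 𝓧 → ℝ) x| ≤ 1 := fun _ _ => by simp
  have hvS : ∀ x ∈ S, |v x| ≤ |a| + |c| := fun x hx => by
    rw [abs_le]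
    constructor <;> linarith [hx.1, hx.2, neg_abs_le a, le_abs_self c, abs_nonneg a, abs_nonneg c]
  -- `c b ≤ u` and the identity tested against `1_S` force `∫ 1_S(X) b (c - v(X)) ≤ 0`
  set F : Ω → ℝ := fun ω => S.indicator (fun x => c - v x) (X ω) * b ω
  have hF0 : 0 ≤ F := fun ω =>
    mul_nonneg (Set.indicator_nonneg (fun x hx => by linarith [hx.2]) _) (hb0 ω)
  have hFi : Integrable F μ := hint (by fun_prop) (K := |a| + |c|) (fun x hx => by
    rw [abs_le]; constructor <;> linarith [hx.1, hx.2, neg_abs_le a, le_abs_self c]) hb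
  have hFle : ∫ ω, F ω ∂μ ≤ 0 := by
    have hsplit : ∫ ω, F ω ∂μ
        = ∫ ω, S.indicator 1 (X ω) * (c * b ω) ∂μ - ∫ ω, S.indicator v (X ω) * b ω ∂μ := by
      rw [← integral_sub (hint measurable_one h1S (hb.const_mul c)) (hint hv hvS hb)]
      refine integral_congr_ae (ae_of_all _ fun ω => ?_)
      by_cases hω : X ω ∈ S
      · simp only [F, Set.indicator_of_mem hω, Pi.one_apply, one_mul]; ring
      · simp only [F, Set.indicator_of_notMem hω, zero_mul, sub_self]
    have hvu : ∫ ω, S.indicator v (X ω) * b ω ∂μ = ∫ ω, S.indicator 1 (X ω) * u ω ∂μ := by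
      rw [h.integral_eq (measurable_one.indicator hS) (K := 1) (ae_of_all _ fun ω => ?_)]
      · refine integral_congr_ae (ae_of_all _ fun ω => ?_)
        by_cases hω : X ω ∈ S
        · simp only [Set.indicator_of_mem hω, Pi.one_apply, one_mul]; ring
        · simp only [Set.indicator_of_notMem hω, zero_mul]
      · by_cases hω : X ω ∈ S <;> simp [hω]
    rw [hsplit, hvu, sub_nonpos]
    exact integral_mono (hint measurable_one h1S (hb.const_mul c)) (hint measurable_one h1S hu)
      fun ω => mul_le_mul_of_nonneg_left (hcu ω) (Set.indicator_nonneg (by simp) _)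
  have hF : F =ᵐ[μ] 0 :=
    (integral_eq_zero_iff_of_nonneg hF0 hFi).1 (le_antisymm hFle (integral_nonneg hF0))
  filter_upwards [hF] with ω hω hbω ha
  by_contra hlt
  have hmem : X ω ∈ S := ⟨ha, not_le.1 hlt⟩
  simp only [F, Set.indicator_of_mem hmem, Pi.zero_apply] at hω
  nlinarith

theorem ae_le_of_mul_le {c : ℝ} (h : CondMeanEq μ X u (fun ω => b ω * v (X ω)))
    (hX : Measurable X) (hv : Measurable v) (hu : Integrable u μ) (hb : Integrable b μ)
    (hb0 : ∀ ω, 0 ≤ b ω) (hcu : ∀ ω, c * b ω ≤ u ω) :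
    ∀ᵐ ω ∂μ, 0 < b ω → c ≤ v (X ω) := by
  have H (n : ℕ) := h.ae_le_of_mul_le_of_le (a := -n) hX hv hu hb hb0 hcu
  filter_upwards [ae_all_iff.2 H] with ω hω hbω
  obtain ⟨n, hn⟩ := exists_nat_ge (-v (X ω))
  exact hω n hbω (by linarith)

theorem ae_mem_Icc (h : CondMeanEq μ X u (fun ω => b ω * v (X ω))) (hX : Measurable X)
    (hv : Measurable v) (hu : Integrable u μ) (hb : Integrable b μ) (hu0 : ∀ ω, 0 ≤ u ω)
    (hub : ∀ ω, u ω ≤ b ω) :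
    ∀ᵐ ω ∂μ, 0 < b ω → v (X ω) ∈ Set.Icc 0 1 := by
  have hb0 : ∀ ω, 0 ≤ b ω := fun ω => (hu0 ω).trans (hub ω)
  have hneg : CondMeanEq μ X (-u) (fun ω => b ω * -v (X ω)) := fun f hf hf1 => by
    simp only [Pi.neg_apply, mul_neg, integral_neg, h f hf hf1]
  have hlo := h.ae_le_of_mul_le hX hv hu hb hb0 (c := 0) fun ω => by simpa using hu0 ω
  have hhi := hneg.ae_le_of_mul_le (v := fun x => -v x) hX hv.neg hu.neg hb hb0 (c := -1)
    fun ω => by simp only [Pi.neg_apply]; linarith [hub ω]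
  filter_upwards [hlo, hhi] with ω h₁ h₂ hbω
  exact ⟨h₁ hbω, by linarith [h₂ hbω]⟩

end CondMeanEq

variable [IsFiniteMeasure μ] {R Y : Ω → ℝ} {m p : 𝓧 → ℝ}

theorem ae_abs_le_one_of_condMeanEq_strata (hX : Measurable X) (hR : Measurable R)
    (hY : Measurable Y) (hm : Measurable m) (hR01 : ∀ ω, R ω ∈ Set.Icc 0 1)
    (hY01 : ∀ ω, Y ω ∈ Set.Icc 0 1)
    (h₁ : CondMeanEq μ X (fun ω => R ω * Y ω) (fun ω => R ω * m (X ω)))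
    (h₀ : CondMeanEq μ X (fun ω => (1 - R ω) * Y ω) (fun ω => (1 - R ω) * m (X ω))) :
    ∀ᵐ ω ∂μ, |m (X ω)| ≤ 1 := by
  have hstratum {b : Ω → ℝ} (hb : Measurable b) (hb01 : ∀ ω, b ω ∈ Set.Icc 0 1)
      (h : CondMeanEq μ X (fun ω => b ω * Y ω) (fun ω => b ω * m (X ω))) :=
    h.ae_mem_Icc hX hm (integrable_of_mem_Icc (hb.mul hY) fun ω => unitInterval.mul_mem
      (hb01 ω) (hY01 ω)) (integrable_of_mem_Icc hb hb01)
      (fun ω => mul_nonneg (hb01 ω).1 (hY01 ω).1)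
      (fun ω => mul_le_of_le_one_right (hb01 ω).1 (hY01 ω).2)
  filter_upwards [hstratum hR hR01 h₁, hstratum (b := fun ω => 1 - R ω) (by fun_prop)
    (fun ω => Set.Icc.mem_iff_one_sub_mem.1 (hR01 ω)) h₀] with ω hω₁ hω₀
  have hm01 : m (X ω) ∈ Set.Icc 0 1 := by
    rcases (hR01 ω).1.lt_or_eq with hpos | hzero
    · exact hω₁ hpos
    · exact hω₀ (by rw [← hzero]; norm_num)
  exact (abs_of_nonneg hm01.1).trans_le hm01.2

theorem ae_abs_le_one_of_condMeanEq (hX : Measurable X) (hR : Measurable R) (hp : Measurable p)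
    (hR01 : ∀ ω, R ω ∈ Set.Icc 0 1) (h : CondMeanEq μ X R (fun ω => p (X ω))) :
    ∀ᵐ ω ∂μ, |p (X ω)| ≤ 1 := by
  have h' : CondMeanEq μ X R (fun ω => 1 * p (X ω)) := fun f hf hf1 => by
    simpa only [one_mul] using h f hf hf1
  filter_upwards [h'.ae_mem_Icc hX hp (integrable_of_mem_Icc hR hR01) (integrable_const 1)
    (fun ω => (hR01 ω).1) (fun ω => (hR01 ω).2)] with ω hω
  exact (abs_of_nonneg (hω one_pos).1).trans_le (hω one_pos).2

variable {q ms w : 𝓧 → ℝ} {C : ℝ}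

theorem integral_augmented_eq_add_sub (hX : Measurable X) (hR : Measurable R) (hY : Measurable Y)
    (hq : Measurable q) (hms : Measurable ms) (hw : Measurable w)
    (hR01 : ∀ ω, R ω ∈ Set.Icc 0 1) (hY01 : ∀ ω, Y ω ∈ Set.Icc 0 1) (hq1 : ∀ x, |q x| ≤ 1)
    (hmsC : ∀ x, |ms x| ≤ C) (hwC : ∀ x, |w x| ≤ C) :
    ∫ ω, (1 - R ω) * q (X ω) * ms (X ω) + w (X ω) * R ω * q (X ω) * (Y ω - ms (X ω)) ∂μ
      = ∫ ω, q (X ω) * ((1 - R ω) * ms (X ω)) ∂μ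
        + (∫ ω, w (X ω) * q (X ω) * (R ω * Y ω) ∂μ
          - ∫ ω, w (X ω) * q (X ω) * (R ω * ms (X ω)) ∂μ) := by
  have hI {F : Ω → ℝ} (hF : ∀ ω, F ω ∈ Set.Icc 0 1) (ω : Ω) : ‖F ω‖ ≤ 1 :=
    (Real.norm_of_nonneg (hF ω).1).trans_le (hF ω).2
  have h1R : ∀ ω, 1 - R ω ∈ Set.Icc 0 1 := fun ω => Set.Icc.mem_iff_one_sub_mem.1 (hR01 ω)
  have I₁ : Integrable (fun ω => q (X ω) * ((1 - R ω) * ms (X ω))) μ :=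
    .of_bound (by fun_prop) _ (ae_of_all _ fun ω =>
      norm_mul_le_of_le (hq1 _) (norm_mul_le_of_le (hI h1R ω) (hmsC _)))
  have I₂ : Integrable (fun ω => w (X ω) * q (X ω) * (R ω * Y ω)) μ :=
    .of_bound (by fun_prop) _ (ae_of_all _ fun ω =>
      norm_mul_le_of_le (norm_mul_le_of_le (hwC _) (hq1 _))
        (norm_mul_le_of_le (hI hR01 ω) (hI hY01 ω)))
  have I₃ : Integrable (fun ω => w (X ω) * q (X ω) * (R ω * ms (X ω))) μ :=
    .of_bound (by fun_prop) _ (ae_of_all _ fun ω =>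
      norm_mul_le_of_le (norm_mul_le_of_le (hwC _) (hq1 _)) (norm_mul_le_of_le (hI hR01 ω) (hmsC _)))
  rw [← integral_sub I₂ I₃, ← integral_add I₁]
  · exact integral_congr_ae (ae_of_all _ fun ω => by ring)
  · exact I₂.sub I₃

theorem integral_augmented_of_outcome_model (hX : Measurable X) (hR : Measurable R)
    (hY : Measurable Y) (hq : Measurable q) (hm : Measurable m) (hw : Measurable w)
    (hR01 : ∀ ω, R ω ∈ Set.Icc 0 1) (hY01 : ∀ ω, Y ω ∈ Set.Icc 0 1) (hq1 : ∀ x, |q x| ≤ 1)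
    (hmC : ∀ x, |m x| ≤ C) (hwC : ∀ x, |w x| ≤ C)
    (h₁ : CondMeanEq μ X (fun ω => R ω * Y ω) (fun ω => R ω * m (X ω)))
    (h₀ : CondMeanEq μ X (fun ω => (1 - R ω) * Y ω) (fun ω => (1 - R ω) * m (X ω))) :
    ∫ ω, (1 - R ω) * q (X ω) * m (X ω) + w (X ω) * R ω * q (X ω) * (Y ω - m (X ω)) ∂μ
      = ∫ ω, (1 - R ω) * q (X ω) * Y ω ∂μ := by
  have hcorr := h₁.integral_eq (f := fun x => w x * q x) (by fun_prop)
    (ae_of_all _ fun ω => norm_mul_le_of_le (hwC _) (hq1 _))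
  rw [integral_augmented_eq_add_sub hX hR hY hq hm hw hR01 hY01 hq1 hmC hwC, hcorr, sub_self, add_zero,
    ← h₀ q hq hq1]
  exact integral_congr_ae (ae_of_all _ fun ω => by ring)

theorem integral_odds_mul_eq {h : 𝓧 → ℝ} {K : ℝ} (hX : Measurable X) (hR : Measurable R)
    (hp : Measurable p) (hw : Measurable w) (hh : Measurable h) (hR01 : ∀ ω, R ω ∈ Set.Icc 0 1)
    (hp1 : ∀ᵐ ω ∂μ, |p (X ω)| ≤ 1) (hwC : ∀ x, |w x| ≤ C) (hhK : ∀ᵐ ω ∂μ, ‖h (X ω)‖ ≤ K)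
    (hRp : CondMeanEq μ X R (fun ω => p (X ω)))
    (hwp : ∀ᵐ ω ∂μ, w (X ω) * p (X ω) = 1 - p (X ω)) :
    ∫ ω, w (X ω) * h (X ω) * R ω ∂μ = ∫ ω, h (X ω) * (1 - R ω) ∂μ := by
  have h1R : CondMeanEq μ X (fun ω => 1 - R ω) (fun ω => 1 - p (X ω)) :=
    CondMeanEq.sub (A := 1) (B := 1) (fun _ _ _ => rfl) hRp hX (integrable_const 1)
      (integrable_const 1) (integrable_of_mem_Icc hR hR01)
      (.of_bound (hp.comp hX).aestronglyMeasurable 1 hp1)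
  calc ∫ ω, w (X ω) * h (X ω) * R ω ∂μ = ∫ ω, w (X ω) * h (X ω) * p (X ω) ∂μ :=
        hRp.integral_eq (f := fun x => w x * h x) (by fun_prop)
          (by filter_upwards [hhK] with ω hω using norm_mul_le_of_le (hwC _) hω)
    _ = ∫ ω, h (X ω) * (1 - p (X ω)) ∂μ :=
        integral_congr_ae (by filter_upwards [hwp] with ω hω; rw [← hω]; ring)
    _ = ∫ ω, h (X ω) * (1 - R ω) ∂μ := (h1R.integral_eq hh hhK).symm

theorem integral_augmented_of_odds_model (hX : Measurable X) (hR : Measurable R)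
    (hY : Measurable Y) (hq : Measurable q) (hm : Measurable m) (hp : Measurable p)
    (hms : Measurable ms) (hw : Measurable w) (hR01 : ∀ ω, R ω ∈ Set.Icc 0 1)
    (hY01 : ∀ ω, Y ω ∈ Set.Icc 0 1) (hq1 : ∀ x, |q x| ≤ 1) (hm1 : ∀ᵐ ω ∂μ, |m (X ω)| ≤ 1)
    (hp1 : ∀ᵐ ω ∂μ, |p (X ω)| ≤ 1) (hmsC : ∀ x, |ms x| ≤ C) (hwC : ∀ x, |w x| ≤ C)
    (h₁ : CondMeanEq μ X (fun ω => R ω * Y ω) (fun ω => R ω * m (X ω)))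
    (h₀ : CondMeanEq μ X (fun ω => (1 - R ω) * Y ω) (fun ω => (1 - R ω) * m (X ω)))
    (hRp : CondMeanEq μ X R (fun ω => p (X ω)))
    (hwp : ∀ᵐ ω ∂μ, w (X ω) * p (X ω) = 1 - p (X ω)) :
    ∫ ω, (1 - R ω) * q (X ω) * ms (X ω) + w (X ω) * R ω * q (X ω) * (Y ω - ms (X ω)) ∂μ
      = ∫ ω, (1 - R ω) * q (X ω) * Y ω ∂μ := by
  have hwY : ∫ ω, w (X ω) * q (X ω) * (R ω * Y ω) ∂μ = ∫ ω, q (X ω) * ((1 - R ω) * Y ω) ∂μ :=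
    calc _ = ∫ ω, w (X ω) * q (X ω) * (R ω * m (X ω)) ∂μ :=
          h₁.integral_eq (f := fun x => w x * q x) (by fun_prop)
            (ae_of_all _ fun ω => norm_mul_le_of_le (hwC _) (hq1 _))
      _ = ∫ ω, w (X ω) * (q (X ω) * m (X ω)) * R ω ∂μ :=
          integral_congr_ae (ae_of_all _ fun ω => by ring)
      _ = ∫ ω, q (X ω) * m (X ω) * (1 - R ω) ∂μ :=
          integral_odds_mul_eq (h := fun x => q x * m x) (K := 1 * 1) hX hR hp hw (by fun_prop)
            hR01 hp1 hwC (by filter_upwards [hm1] with ω hω using norm_mul_le_of_le (hq1 _) hω)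
            hRp hwp
      _ = ∫ ω, q (X ω) * ((1 - R ω) * Y ω) ∂μ := by
          rw [h₀ q hq hq1]; exact integral_congr_ae (ae_of_all _ fun ω => by ring)
  have hwms : ∫ ω, w (X ω) * q (X ω) * (R ω * ms (X ω)) ∂μ
      = ∫ ω, q (X ω) * ((1 - R ω) * ms (X ω)) ∂μ :=
    calc _ = ∫ ω, w (X ω) * (q (X ω) * ms (X ω)) * R ω ∂μ :=
          integral_congr_ae (ae_of_all _ fun ω => by ring)
      _ = ∫ ω, q (X ω) * ms (X ω) * (1 - R ω) ∂μ :=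
          integral_odds_mul_eq (h := fun x => q x * ms x) hX hR hp hw (by fun_prop) hR01 hp1 hwC
            (ae_of_all _ fun ω => norm_mul_le_of_le (hq1 _) (hmsC _)) hRp hwp
      _ = ∫ ω, q (X ω) * ((1 - R ω) * ms (X ω)) ∂μ :=
          integral_congr_ae (ae_of_all _ fun ω => by ring)
  rw [integral_augmented_eq_add_sub hX hR hY hq hms hw hR01 hY01 hq1 hmsC hwC, hwY, hwms, add_sub_cancel]
  exact integral_congr_ae (ae_of_all _ fun ω => by ring)

end

theorem sensitivity_doubly_robust_general
    {Ω 𝓧 : Type*} [MeasurableSpace Ω] [MeasurableSpace 𝓧]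
    (μ : Measure Ω) [IsProbabilityMeasure μ]
    (X : Ω → 𝓧) (Y R : Ω → ℝ) (g m p mstar wstar : 𝓧 → ℝ)
    (hX : Measurable X) (hY : Measurable Y) (hR : Measurable R)
    (hg : Measurable g) (hm : Measurable m) (hp : Measurable p)
    (hms : Measurable mstar) (hws : Measurable wstar)
    (hYbin : ∀ ω, Y ω = 0 ∨ Y ω = 1) (hRbin : ∀ ω, R ω = 0 ∨ R ω = 1)
    (hgbin : ∀ x, g x = 0 ∨ g x = 1)
    -- working models bounded
    (C : ℝ) (hmsbd : ∀ x, |mstar x| ≤ C) (hwsbd : ∀ x, |wstar x| ≤ C)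
    -- `m` is a version of `Pr[Y=1 | X, R=1]`
    (hm_cond : ∀ f : 𝓧 → ℝ, Measurable f → (∀ x, |f x| ≤ 1) →
      ∫ ω, f (X ω) * R ω * Y ω ∂μ = ∫ ω, f (X ω) * R ω * m (X ω) ∂μ)
    -- conditional exchangeability `Y ⟂ R | X`
    (hexch : ∀ f : 𝓧 → ℝ, Measurable f → (∀ x, |f x| ≤ 1) →
      ∫ ω, f (X ω) * (1 - R ω) * Y ω ∂μ = ∫ ω, f (X ω) * (1 - R ω) * m (X ω) ∂μ)
    -- `p` is a version of `Pr[R=1 | X]`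
    (hp_cond : ∀ f : 𝓧 → ℝ, Measurable f → (∀ x, |f x| ≤ 1) →
      ∫ ω, f (X ω) * R ω ∂μ = ∫ ω, f (X ω) * p (X ω) ∂μ)
    -- positivity
    (hpos : ∀ᵐ ω ∂μ, 0 < p (X ω))
    -- either the outcome model or the participation-odds model is correctly specified
    (hdr : (∀ x, mstar x = m x) ∨ (∀ x, wstar x = (1 - p x) / p x)) :
    (∫ ω, (1 - R ω) * g (X ω) * mstar (X ω)
        + wstar (X ω) * R ω * g (X ω) * (Y ω - mstar (X ω)) ∂μ)
      / (∫ ω, (1 - R ω) * mstar (X ω)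
        + wstar (X ω) * R ω * (Y ω - mstar (X ω)) ∂μ)
    = (∫ ω, (1 - R ω) * g (X ω) * Y ω ∂μ) / (∫ ω, (1 - R ω) * Y ω ∂μ) := by
  have hR01 : ∀ ω, R ω ∈ Set.Icc 0 1 := fun ω => by rcases hRbin ω with h | h <;> simp [h]
  have hY01 : ∀ ω, Y ω ∈ Set.Icc 0 1 := fun ω => by rcases hYbin ω with h | h <;> simp [h]
  have h₁ : CondMeanEq μ X (fun ω => R ω * Y ω) (fun ω => R ω * m (X ω)) :=
    fun f hf hf1 => by simpa only [mul_assoc] using hm_cond f hf hf1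
  have h₀ : CondMeanEq μ X (fun ω => (1 - R ω) * Y ω) (fun ω => (1 - R ω) * m (X ω)) :=
    fun f hf hf1 => by simpa only [mul_assoc] using hexch f hf hf1
  have key (q : 𝓧 → ℝ) (hq : Measurable q) (hq1 : ∀ x, |q x| ≤ 1) :
      ∫ ω, (1 - R ω) * q (X ω) * mstar (X ω)
        + wstar (X ω) * R ω * q (X ω) * (Y ω - mstar (X ω)) ∂μ
      = ∫ ω, (1 - R ω) * q (X ω) * Y ω ∂μ := by
    rcases hdr with hmstar | hwstar
    · obtain rfl : mstar = m := funext hmstar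
      exact integral_augmented_of_outcome_model hX hR hY hq hms hws hR01 hY01 hq1 hmsbd hwsbd
        h₁ h₀
    · refine integral_augmented_of_odds_model hX hR hY hq hm hp hms hws hR01 hY01 hq1
        (ae_abs_le_one_of_condMeanEq_strata hX hR hY hm hR01 hY01 h₁ h₀)
        (ae_abs_le_one_of_condMeanEq hX hR hp hR01 hp_cond) hmsbd hwsbd h₁ h₀ hp_cond ?_
      filter_upwards [hpos] with ω hω
      rw [hwstar, div_mul_cancel₀ _ hω.ne']
  have hden := key 1 measurable_one (by simp)
  simp only [Pi.one_apply, mul_one] at hden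
  rw [key g hg fun x => by rcases hgbin x with h | h <;> simp [h], hden]

/-- Population-level double robustness of the augmented
(influence-function based) estimand for sensitivity.  Here `m` is the true version of
`Pr[Y=1|X,R=1]` (with conditional exchangeability encoded by `hexch`), `p` the true version
of `Pr[R=1|X]`, and `w(x) = Pr[R=0|X=x]/Pr[R=1|X=x] = (1-p(x))/p(x)`.  If the working
models satisfy either `m⋆ = m` (with `w⋆` an arbitrary bounded function) or
`w⋆ = w` (with `m⋆` an arbitrary bounded function), then the augmented ratio
`E[I(R=0) g(X) m⋆(X) + w⋆(X) I(R=1) g(X)(I(Y=1) − m⋆(X))]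
  / E[I(R=0) m⋆(X) + w⋆(X) I(R=1)(I(Y=1) − m⋆(X))]`
equals the target-population sensitivity `Pr[g(X)=1 | Y=1, R=0]`. -/
theorem sensitivity_doubly_robust
    {Ω 𝓧 : Type*} [MeasurableSpace Ω] [MeasurableSpace 𝓧]
    (μ : Measure Ω) [IsProbabilityMeasure μ]
    (X : Ω → 𝓧) (Y R : Ω → ℝ) (g m p mstar wstar : 𝓧 → ℝ)
    (hX : Measurable X) (hY : Measurable Y) (hR : Measurable R)
    (hg : Measurable g) (hm : Measurable m) (hp : Measurable p)
    (hms : Measurable mstar) (hws : Measurable wstar)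
    (hYbin : ∀ ω, Y ω = 0 ∨ Y ω = 1) (hRbin : ∀ ω, R ω = 0 ∨ R ω = 1)
    (hgbin : ∀ x, g x = 0 ∨ g x = 1)
    -- working models bounded
    (C : ℝ) (hmsbd : ∀ x, |mstar x| ≤ C) (hwsbd : ∀ x, |wstar x| ≤ C)
    -- `m` is a version of `Pr[Y=1 | X, R=1]`
    (hm_cond : ∀ f : 𝓧 → ℝ, Measurable f → (∀ x, |f x| ≤ 1) →
      ∫ ω, f (X ω) * R ω * Y ω ∂μ = ∫ ω, f (X ω) * R ω * m (X ω) ∂μ)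
    -- conditional exchangeability `Y ⟂ R | X`
    (hexch : ∀ f : 𝓧 → ℝ, Measurable f → (∀ x, |f x| ≤ 1) →
      ∫ ω, f (X ω) * (1 - R ω) * Y ω ∂μ = ∫ ω, f (X ω) * (1 - R ω) * m (X ω) ∂μ)
    -- `p` is a version of `Pr[R=1 | X]`
    (hp_cond : ∀ f : 𝓧 → ℝ, Measurable f → (∀ x, |f x| ≤ 1) →
      ∫ ω, f (X ω) * R ω ∂μ = ∫ ω, f (X ω) * p (X ω) ∂μ)
    -- positivity
    (hpos : ∀ᵐ ω ∂μ, 0 < p (X ω))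
    -- `α₀ = E[m(X) | R=0] > 0` (target population nonempty)
    (hR0 : 0 < ∫ ω, (1 - R ω) ∂μ)
    (hα₀ : 0 < ∫ ω, (1 - R ω) * m (X ω) ∂μ)
    -- either the outcome model or the participation-odds model is correctly specified
    (hdr : (∀ x, mstar x = m x) ∨ (∀ x, wstar x = (1 - p x) / p x)) :
    (∫ ω, (1 - R ω) * g (X ω) * mstar (X ω)
        + wstar (X ω) * R ω * g (X ω) * (Y ω - mstar (X ω)) ∂μ)
      / (∫ ω, (1 - R ω) * mstar (X ω)
        + wstar (X ω) * R ω * (Y ω - mstar (X ω)) ∂μ)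
    = (∫ ω, (1 - R ω) * g (X ω) * Y ω ∂μ) / (∫ ω, (1 - R ω) * Y ω ∂μ) :=
  sensitivity_doubly_robust_general μ X Y R g m p mstar wstar hX hY hR hg hm hp hms hws hYbin hRbin
    hgbin C hmsbd hwsbd hm_cond hexch hp_cond hpos hdr
end
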